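/- arXiv:1110.0385 — 5 statements merged into one kernel-verified Lean document; each statement's English description precedes it below -/
import Mathlib

section
/- Let E be a Banach space and P a metric space. Assume F : [0,∞)×E×P → E is continuous uniformly with respect to its first variable, for every ū∈E and μ∈P the set {F(t,ū,μ) : t≥0} is relatively compact, and there is a continuous map F̂ : E×P → E such that for every ū∈E and μ∈P, F̂(ū,μ) = lim_{T→∞, v̄→ū, ν→μ} (1/T)∫₀^T F(τ+h, v̄, ν) dτ, uniformly with respect to h>0. Then for every compact set Q⊂E, every sequence T_n → +∞ in (0,∞), and every sequence μ_n → μ₀ in P, one has lim_{n→∞} (1/T_n)∫₀^{T_n} F(τ+h, w̄, μ_n) dτ = F̂(w̄, μ₀), uniformly with respect to w̄∈Q and h>0. -/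
open MeasureTheory Filter Set Topology

/-- Lemma 2.4: under the almost-periodicity type assumption (H6), the averages
`(1/Tₙ)∫₀^{Tₙ} F(τ+h, w, μₙ) dτ` converge to `F̂(w, μ₀)` uniformly with respect to
`w` in a compact set `Q` and to `h > 0`. -/
theorem uniform_convergence_of_averages
    {E : Type*} [NormedAddCommGroup E] [NormedSpace ℝ E] [CompleteSpace E]
    {P : Type*} [MetricSpace P]
    (F : ℝ → E → P → E)
    (hFcont : ContinuousOn (fun p : ℝ × E × P => F p.1 p.2.1 p.2.2)
      (Set.Ici 0 ×ˢ (Set.univ : Set (E × P))))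
    -- continuity uniform with respect to the first variable
    (hFuc : ∀ (u0 : E) (μ : P), ∀ ε > (0:ℝ), ∃ δ > (0:ℝ), ∀ t : ℝ, 0 ≤ t →
      ∀ (v : E) (ν : P), ‖v - u0‖ ≤ δ → dist ν μ ≤ δ → ‖F t v ν - F t u0 μ‖ ≤ ε)
    -- relative compactness of time orbits
    (hFcomp : ∀ (u0 : E) (μ : P),
      IsCompact (closure {y : E | ∃ t : ℝ, 0 ≤ t ∧ y = F t u0 μ}))
    -- existence of the average F̂
    (Fhat : E → P → E) (hFhatc : Continuous fun p : E × P => Fhat p.1 p.2)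
    (havg : ∀ (u0 : E) (μ : P), ∀ ε > (0:ℝ), ∃ T₀ > (0:ℝ), ∃ δ > (0:ℝ),
      ∀ T : ℝ, T₀ ≤ T → ∀ (v : E) (ν : P), ‖v - u0‖ < δ → dist ν μ < δ →
        ∀ h : ℝ, 0 < h →
          ‖(1 / T) • (∫ τ in (0:ℝ)..T, F (τ + h) v ν) - Fhat u0 μ‖ ≤ ε) :
    ∀ Q : Set E, IsCompact Q →
    ∀ Tn : ℕ → ℝ, (∀ n, 0 < Tn n) → Tendsto Tn atTop atTop →
    ∀ (μn : ℕ → P) (μ₀ : P), Tendsto μn atTop (𝓝 μ₀) →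
    ∀ ε > (0:ℝ), ∃ N : ℕ, ∀ n ≥ N, ∀ w ∈ Q, ∀ h : ℝ, 0 < h →
      ‖(1 / Tn n) • (∫ τ in (0:ℝ)..(Tn n), F (τ + h) w (μn n)) - Fhat w μ₀‖ ≤ ε := by
  intro Q hQ Tn hTnpos hTn μn μ₀ hμ ε hε
  have hcont : Continuous fun v : E => Fhat v μ₀ :=
    hFhatc.comp (continuous_id.prodMk continuous_const)
  have key : ∀ w : E, ∃ T₀ > (0:ℝ), ∃ δ > (0:ℝ),
      (∀ T : ℝ, T₀ ≤ T → ∀ (v : E) (ν : P), ‖v - w‖ < δ → dist ν μ₀ < δ →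
        ∀ h : ℝ, 0 < h →
          ‖(1 / T) • (∫ τ in (0:ℝ)..T, F (τ + h) v ν) - Fhat w μ₀‖ ≤ ε / 2) ∧
      (∀ v : E, ‖v - w‖ < δ → ‖Fhat v μ₀ - Fhat w μ₀‖ ≤ ε / 2) := by
    intro w
    obtain ⟨T₀, hT₀, δ₁, hδ₁, H⟩ := havg w μ₀ (ε / 2) (by linarith)
    obtain ⟨δ₂, hδ₂, H2⟩ := Metric.continuous_iff.mp hcont w (ε / 2) (by linarith)
    refine ⟨T₀, hT₀, min δ₁ δ₂, lt_min hδ₁ hδ₂, ?_, ?_⟩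
    · intro T hT v ν hv hν h hh
      exact H T hT v ν (lt_of_lt_of_le hv (min_le_left _ _))
        (lt_of_lt_of_le hν (min_le_left _ _)) h hh
    · intro v hv
      have := H2 v (by rw [dist_eq_norm]; exact lt_of_lt_of_le hv (min_le_right _ _))
      rw [dist_eq_norm] at this
      exact this.le
  choose T₀ hT₀ δ hδ H1 H2 using key
  obtain ⟨s, hsQ, hcov⟩ := hQ.elim_nhds_subcover (fun w => Metric.ball w (δ w))
    (fun w _ => Metric.ball_mem_nhds w (hδ w))
  have hev : ∀ᶠ n in atTop, ∀ w ∈ s, T₀ w ≤ Tn n ∧ dist (μn n) μ₀ < δ w := by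
    rw [Filter.eventually_all_finset]
    intro w _
    filter_upwards [hTn.eventually_ge_atTop (T₀ w),
      hμ (Metric.ball_mem_nhds μ₀ (hδ w))] with n h1 h2
    exact ⟨h1, Metric.mem_ball.mp h2⟩
  obtain ⟨N, hN⟩ := Filter.eventually_atTop.mp hev
  refine ⟨N, fun n hn w hw h hh => ?_⟩
  obtain ⟨i, hi⟩ := Set.mem_iUnion₂.mp (hcov hw)
  obtain ⟨his, hwi⟩ := hi
  have hwi' : ‖w - i‖ < δ i := by
    rw [← dist_eq_norm]; exact Metric.mem_ball.mp hwi
  obtain ⟨hT, hdist⟩ := hN n hn i his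
  have A := H1 i (Tn n) hT w (μn n) hwi' hdist h hh
  have B := H2 i w hwi'
  calc ‖(1 / Tn n) • (∫ τ in (0:ℝ)..(Tn n), F (τ + h) w (μn n)) - Fhat w μ₀‖
      ≤ ‖(1 / Tn n) • (∫ τ in (0:ℝ)..(Tn n), F (τ + h) w (μn n)) - Fhat i μ₀‖
        + ‖Fhat i μ₀ - Fhat w μ₀‖ := norm_sub_le_norm_sub_add_norm_sub _ _ _
    _ ≤ ε / 2 + ε / 2 := by
        refine add_le_add A ?_
        rw [norm_sub_rev]; exact B
    _ = ε := by ring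
end

section
/- Let E be a Banach space, P a metric space, and for each μ∈P, λ>0 let {R^{(μ,λ)}(t,s)}_{t≥s≥0} be an evolution system on E. Assume (H4): there are M≥1 and ω∈ℝ with ‖R^{(μ,λ)}(t,s)‖ ≤ M e^{ω(t−s)} for all 0≤s≤t, μ∈P, λ>0; and (H5): there are C₀ semigroups {Ŝ^{(μ)}(t)}_{t≥0} on E, μ∈P, such that for all t≥s≥0, μ∈P and ū∈E, R^{(ν,λ)}(t,s)v̄ → Ŝ^{(μ)}(t−s)ū as λ→0⁺, v̄→ū, ν→μ, uniformly for t,s from bounded intervals. Let (T_n) in (0,∞), (k_n) positive integers, (λ_n) in (0,∞) and (μ_n) in P satisfy T_n → +∞, k_n → ∞, λ_n → 0, k_n λ_n T_n → t for some t>0, μ_n → μ₀, and k_n λ_n T_n ≤ t for almost all n. Then for every continuous function w : [0,t] → E, λ_n T_n ∑_{k=0}^{k_n−1} R^{(μ_n,λ_n)}(k_n λ_n T_n, k λ_n T_n) w(k λ_n T_n) → ∫₀^t Ŝ^{(μ₀)}(t−s) w(s) ds as n → ∞. -/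
open MeasureTheory Filter Set Topology

/-- An evolution system on a Banach space `E`. -/
def IsEvolutionSystem {E : Type*} [NormedAddCommGroup E] [NormedSpace ℝ E]
    (R : ℝ → ℝ → E →L[ℝ] E) : Prop :=
  (∀ t : ℝ, 0 ≤ t → R t t = ContinuousLinearMap.id ℝ E) ∧
  (∀ t s r : ℝ, 0 ≤ r → r ≤ s → s ≤ t → (R t s).comp (R s r) = R t r) ∧
  (∀ u : E, ContinuousOn (fun p : ℝ × ℝ => R p.1 p.2 u) {p : ℝ × ℝ | 0 ≤ p.2 ∧ p.2 ≤ p.1})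

/-- A `C₀` semigroup of bounded linear operators on `E`. -/
def IsC0Semigroup {E : Type*} [NormedAddCommGroup E] [NormedSpace ℝ E]
    (S : ℝ → E →L[ℝ] E) : Prop :=
  S 0 = ContinuousLinearMap.id ℝ E ∧
  (∀ t s : ℝ, 0 ≤ t → 0 ≤ s → S (t + s) = (S t).comp (S s)) ∧
  (∀ u : E, ContinuousOn (fun t : ℝ => S t u) (Set.Ici 0))

set_option maxHeartbeats 2000000

/-- Lemma 2.5: convergence of the Riemann-type operator sums
`λₙTₙ ∑_{k<kₙ} R^{(μₙ,λₙ)}(kₙλₙTₙ, kλₙTₙ) w(kλₙTₙ)` to `∫₀ᵗ Ŝ^{(μ₀)}(t−s)w(s) ds`. -/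
theorem riemann_sum_convergence
    {E : Type*} [NormedAddCommGroup E] [NormedSpace ℝ E] [CompleteSpace E]
    {P : Type*} [MetricSpace P]
    (R : P → ℝ → ℝ → ℝ → E →L[ℝ] E)
    (hR : ∀ (μ : P) (lam : ℝ), 0 < lam → IsEvolutionSystem (R μ lam))
    -- (H4)
    (M ω : ℝ) (hM : 1 ≤ M)
    (hH4 : ∀ (μ : P) (lam : ℝ), 0 < lam → ∀ t s : ℝ, 0 ≤ s → s ≤ t →
      ‖R μ lam t s‖ ≤ M * Real.exp (ω * (t - s)))
    -- (H5)
    (Shat : P → ℝ → E →L[ℝ] E) (hShat : ∀ μ, IsC0Semigroup (Shat μ))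
    (hH5 : ∀ (μ : P) (u0 : E) (T : ℝ), 0 < T → ∀ ε > (0:ℝ), ∃ δ > (0:ℝ),
      ∀ (ν : P) (lam : ℝ) (v : E), dist ν μ < δ → 0 < lam → lam < δ → ‖v - u0‖ < δ →
        ∀ t s : ℝ, 0 ≤ s → s ≤ t → t ≤ T → ‖R ν lam t s v - Shat μ (t - s) u0‖ ≤ ε)
    -- the sequences
    (Tn : ℕ → ℝ) (hTn : ∀ n, 0 < Tn n) (hTninf : Tendsto Tn atTop atTop)
    (kn : ℕ → ℕ) (hkn : ∀ n, 0 < kn n) (hkninf : Tendsto kn atTop atTop)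
    (lamn : ℕ → ℝ) (hlamn : ∀ n, 0 < lamn n) (hlamn0 : Tendsto lamn atTop (𝓝 0))
    (t : ℝ) (ht : 0 < t)
    (hprod : Tendsto (fun n => (kn n : ℝ) * lamn n * Tn n) atTop (𝓝 t))
    (hle : ∀ᶠ n in atTop, (kn n : ℝ) * lamn n * Tn n ≤ t)
    (μn : ℕ → P) (μ₀ : P) (hμn : Tendsto μn atTop (𝓝 μ₀))
    (w : ℝ → E) (hw : ContinuousOn w (Set.Icc 0 t)) :
    Tendsto (fun n => (lamn n * Tn n) •
        ∑ k ∈ Finset.range (kn n),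
          R (μn n) (lamn n) ((kn n : ℝ) * lamn n * Tn n) ((k : ℝ) * lamn n * Tn n)
            (w ((k : ℝ) * lamn n * Tn n)))
      atTop (𝓝 (∫ s in (0:ℝ)..t, Shat μ₀ (t - s) (w s))) := by
  classical
  -- abbreviations
  set T : ℝ := t + 1 with hT_def
  have hTpos : (0:ℝ) < T := by simp only [hT_def]; linarith
  have htT : t ≤ T := by simp only [hT_def]; linarith
  set C : ℝ := M * Real.exp (|ω| * T) with hC_def
  have hCpos : 0 < C := mul_pos (by linarith) (Real.exp_pos _)
  -- uniform bound on the semigroup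
  have hSbound : ∀ τ : ℝ, 0 ≤ τ → τ ≤ T → ∀ u : E, ‖Shat μ₀ τ u‖ ≤ C * ‖u‖ := by
    intro τ hτ0 hτT u
    refine le_of_forall_pos_le_add ?_
    intro ε hε
    obtain ⟨δ, hδ, hp⟩ := hH5 μ₀ u T hTpos ε hε
    have h1 := hp μ₀ (δ/2) u (by simpa using hδ) (by linarith) (by linarith)
      (by simpa using hδ) τ 0 le_rfl hτ0 hτT
    have h2 : ‖R μ₀ (δ/2) τ 0 u‖ ≤ C * ‖u‖ := by
      have hop := (R μ₀ (δ/2) τ 0).le_opNorm u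
      have hb := hH4 μ₀ (δ/2) (by linarith) τ 0 le_rfl hτ0
      have hexp : Real.exp (ω * (τ - 0)) ≤ Real.exp (|ω| * T) :=
        Real.exp_le_exp.mpr (by nlinarith [le_abs_self ω, abs_nonneg ω])
      calc ‖R μ₀ (δ/2) τ 0 u‖ ≤ ‖R μ₀ (δ/2) τ 0‖ * ‖u‖ := hop
        _ ≤ (M * Real.exp (ω * (τ - 0))) * ‖u‖ :=
            mul_le_mul_of_nonneg_right hb (norm_nonneg u)
        _ ≤ C * ‖u‖ := by
            refine mul_le_mul_of_nonneg_right ?_ (norm_nonneg u)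
            rw [hC_def]
            exact mul_le_mul_of_nonneg_left hexp (by linarith)
    have heq : Shat μ₀ τ u = R μ₀ (δ/2) τ 0 u - (R μ₀ (δ/2) τ 0 u - Shat μ₀ (τ - 0) u) := by
      rw [sub_zero]; abel
    calc ‖Shat μ₀ τ u‖ ≤ ‖R μ₀ (δ/2) τ 0 u‖ + ‖R μ₀ (δ/2) τ 0 u - Shat μ₀ (τ - 0) u‖ := by
          rw [heq]; exact norm_sub_le _ _
      _ ≤ C * ‖u‖ + ε := add_le_add h2 h1
  -- compact image of w and sup bound
  have h0mem : (0:ℝ) ∈ Icc (0:ℝ) t := ⟨le_rfl, ht.le⟩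
  set K : Set E := w '' Icc 0 t with hK_def
  have hKc : IsCompact K := isCompact_Icc.image_of_continuousOn hw
  obtain ⟨W, hW⟩ := isCompact_Icc.exists_bound_of_continuousOn hw
  have hW0 : 0 ≤ W := le_trans (norm_nonneg (w 0)) (hW 0 h0mem)
  -- key: uniform version of (H5) over the compact set K
  have key : ∀ ε : ℝ, 0 < ε → ∃ δ > (0:ℝ), ∀ ν lam, dist ν μ₀ < δ → 0 < lam → lam < δ →
      ∀ s' ∈ Icc (0:ℝ) t, ∀ τ s : ℝ, 0 ≤ s → s ≤ τ → τ ≤ T →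
        ‖R ν lam τ s (w s') - Shat μ₀ (τ - s) (w s')‖ ≤ ε := by
    intro ε hε
    have hchoice : ∀ u : E, ∃ d > (0:ℝ), ∀ ν lam v, dist ν μ₀ < d → 0 < lam → lam < d →
        ‖v - u‖ < d → ∀ τ s : ℝ, 0 ≤ s → s ≤ τ → τ ≤ T →
        ‖R ν lam τ s v - Shat μ₀ (τ - s) u‖ ≤ ε/2 :=
      fun u => hH5 μ₀ u T hTpos (ε/2) (by linarith)
    choose d hd hdp using hchoice
    set r : E → ℝ := fun u => min (d u) (ε / (2*C)) with hr_def
    have hr : ∀ u, 0 < r u := fun u => lt_min (hd u) (by positivity)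
    have hcov : K ⊆ ⋃ u ∈ K, Metric.ball u (r u) := fun v hv =>
      Set.mem_biUnion hv (Metric.mem_ball_self (hr v))
    obtain ⟨b, hbK, hbfin, hbcov⟩ :=
      hKc.elim_finite_subcover_image (fun u _ => Metric.isOpen_ball) hcov
    have hw0K : w 0 ∈ K := ⟨0, h0mem, rfl⟩
    obtain ⟨u₀, hu₀b, _⟩ := Set.mem_iUnion₂.mp (hbcov hw0K)
    have hbne : hbfin.toFinset.Nonempty := ⟨u₀, hbfin.mem_toFinset.mpr hu₀b⟩
    refine ⟨hbfin.toFinset.inf' hbne d, ?_, ?_⟩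
    · exact (Finset.lt_inf'_iff hbne).mpr fun u _ => hd u
    · intro ν lam hν hlam hlamδ s' hs' τ s hs0 hsτ hτT
      have hvK : w s' ∈ K := ⟨s', hs', rfl⟩
      obtain ⟨u, hub, hvball⟩ := Set.mem_iUnion₂.mp (hbcov hvK)
      have hδle : hbfin.toFinset.inf' hbne d ≤ d u :=
        Finset.inf'_le d (hbfin.mem_toFinset.mpr hub)
      have hvr : ‖w s' - u‖ < r u := by
        rw [← dist_eq_norm]; exact hvball
      have hvu : ‖w s' - u‖ < d u := hvr.trans_le (min_le_left _ _)
      have h1 := hdp u ν lam (w s') (hν.trans_le hδle) hlam (hlamδ.trans_le hδle)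
        hvu τ s hs0 hsτ hτT
      have h2 : ‖Shat μ₀ (τ - s) u - Shat μ₀ (τ - s) (w s')‖ ≤ ε/2 := by
        have hb := hSbound (τ - s) (by linarith) (by linarith) (u - w s')
        rw [map_sub] at hb
        have hnorm : ‖u - w s'‖ ≤ ε / (2*C) := by
          rw [norm_sub_rev]
          exact le_of_lt (hvr.trans_le (min_le_right _ _))
        calc ‖Shat μ₀ (τ - s) u - Shat μ₀ (τ - s) (w s')‖ ≤ C * ‖u - w s'‖ := hb
          _ ≤ C * (ε / (2*C)) := mul_le_mul_of_nonneg_left hnorm hCpos.le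
          _ = ε/2 := by field_simp
      calc ‖R ν lam τ s (w s') - Shat μ₀ (τ - s) (w s')‖
          ≤ ‖R ν lam τ s (w s') - Shat μ₀ (τ - s) u‖
            + ‖Shat μ₀ (τ - s) u - Shat μ₀ (τ - s) (w s')‖ := by
            have := dist_triangle (R ν lam τ s (w s')) (Shat μ₀ (τ - s) u)
              (Shat μ₀ (τ - s) (w s'))
            simpa [dist_eq_norm] using this
        _ ≤ ε/2 + ε/2 := add_le_add h1 h2
        _ = ε := by ring
  -- joint continuity of F on D
  set F : ℝ × ℝ → E := fun p => Shat μ₀ p.1 (w p.2) with hF_def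
  set D : Set (ℝ × ℝ) := Icc 0 T ×ˢ Icc 0 t with hD_def
  have hDc : IsCompact D := isCompact_Icc.prod isCompact_Icc
  have hFc : ContinuousOn F D := by
    rintro ⟨τ₀, s₀⟩ ⟨hτ₀, hs₀⟩
    have hsnd : Tendsto (fun q : ℝ × ℝ => q.2) (𝓝[D] (τ₀, s₀)) (𝓝[Icc 0 t] s₀) :=
      continuous_snd.continuousWithinAt.tendsto_nhdsWithin (fun q hq => hq.2)
    have hfst : Tendsto (fun q : ℝ × ℝ => q.1) (𝓝[D] (τ₀, s₀)) (𝓝[Ici 0] τ₀) :=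
      continuous_fst.continuousWithinAt.tendsto_nhdsWithin (fun q hq => hq.1.1)
    have hwt : Tendsto w (𝓝[Icc 0 t] s₀) (𝓝 (w s₀)) := hw s₀ hs₀
    have hw2 : Tendsto (fun q : ℝ × ℝ => w q.2) (𝓝[D] (τ₀, s₀)) (𝓝 (w s₀)) :=
      hwt.comp hsnd
    have hA : Tendsto (fun q : ℝ × ℝ => Shat μ₀ q.1 (w q.2 - w s₀)) (𝓝[D] (τ₀, s₀)) (𝓝 0) := by
      apply squeeze_zero_norm' (a := fun q : ℝ × ℝ => C * ‖w q.2 - w s₀‖)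
      · filter_upwards [self_mem_nhdsWithin] with q hq
        exact hSbound q.1 hq.1.1 hq.1.2 _
      · have h1 := (hw2.sub (tendsto_const_nhds (x := w s₀))).norm
        simpa using (tendsto_const_nhds (x := C)).mul h1
    have hB : Tendsto (fun q : ℝ × ℝ => Shat μ₀ q.1 (w s₀)) (𝓝[D] (τ₀, s₀))
        (𝓝 (Shat μ₀ τ₀ (w s₀))) := by
      have hSt : Tendsto (fun τ : ℝ => Shat μ₀ τ (w s₀)) (𝓝[Ici 0] τ₀)
          (𝓝 (Shat μ₀ τ₀ (w s₀))) := (hShat μ₀).2.2 (w s₀) τ₀ hτ₀.1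
      exact hSt.comp hfst
    have hsum := hA.add hB
    have heq : (fun q : ℝ × ℝ => Shat μ₀ q.1 (w q.2 - w s₀) + Shat μ₀ q.1 (w s₀)) = F := by
      funext q
      simp [hF_def, map_sub]
    rw [heq] at hsum
    simpa [ContinuousWithinAt, hF_def] using hsum
  have hFu := Metric.uniformContinuousOn_iff.mp
    (hDc.uniformContinuousOn_of_continuous hFc)
  -- continuity and integrability of g
  set g : ℝ → E := fun s => Shat μ₀ (t - s) (w s) with hg_def
  have hmapsD : ∀ s ∈ Icc (0:ℝ) t, ((t - s, s) : ℝ × ℝ) ∈ D := by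
    intro s hs
    have h1 : 0 ≤ t - s := by linarith [hs.2]
    have h2 : t - s ≤ T := by linarith [hs.1, htT]
    exact ⟨⟨h1, h2⟩, hs⟩
  have hgc : ContinuousOn g (Icc 0 t) := by
    have : ContinuousOn (fun s : ℝ => F (t - s, s)) (Icc 0 t) :=
      hFc.comp ((continuous_const.sub continuous_id).prodMk continuous_id).continuousOn hmapsD
    exact this
  have huIcc : Set.uIcc (0:ℝ) t = Icc 0 t := Set.uIcc_of_le ht.le
  have hgInt : ∀ a b : ℝ, a ∈ Icc (0:ℝ) t → b ∈ Icc (0:ℝ) t →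
      IntervalIntegrable g MeasureTheory.volume a b := by
    intro a b ha hb
    apply ContinuousOn.intervalIntegrable
    apply hgc.mono
    rw [← huIcc]
    exact Set.uIcc_subset_uIcc (huIcc ▸ ha) (huIcc ▸ hb)
  -- sequences
  set h : ℕ → ℝ := fun n => lamn n * Tn n with hh_def
  have hhpos : ∀ n, 0 < h n := fun n => mul_pos (hlamn n) (hTn n)
  set tns : ℕ → ℝ := fun n => (kn n : ℝ) * lamn n * Tn n with htns_def
  have htns_eq : ∀ n, tns n = (kn n : ℝ) * h n := fun n => mul_assoc _ _ _
  have htnpos : ∀ n, 0 < tns n := fun n => by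
    rw [htns_eq]
    exact mul_pos (by exact_mod_cast hkn n) (hhpos n)
  have htnt : Tendsto tns atTop (𝓝 t) := hprod
  have hinv : Tendsto (fun n => ((kn n : ℝ))⁻¹) atTop (𝓝 0) :=
    (tendsto_natCast_atTop_atTop.comp hkninf).inv_tendsto_atTop
  have hh0 : Tendsto h atTop (𝓝 0) := by
    have heq : (fun n => tns n * ((kn n : ℝ))⁻¹) = h := by
      funext n
      have hk : ((kn n : ℝ)) ≠ 0 := (Nat.cast_pos.mpr (hkn n)).ne'
      rw [htns_eq n, mul_comm ((kn n : ℝ)) (h n), mul_assoc, mul_inv_cancel₀ hk, mul_one]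
    rw [← heq]
    simpa using htnt.mul hinv
  -- main argument
  rw [Metric.tendsto_atTop]
  intro ε hε
  set ε₁ : ℝ := ε / (2*t + 2) with hε₁_def
  have hε₁ : 0 < ε₁ := div_pos hε (by linarith)
  obtain ⟨δ₁, hδ₁, hkey⟩ := key ε₁ hε₁
  obtain ⟨δ₂, hδ₂, hucont⟩ := hFu ε₁ hε₁
  have e1 : ∀ᶠ n in atTop, dist (μn n) μ₀ < δ₁ := Metric.tendsto_nhds.mp hμn δ₁ hδ₁
  have e2 : ∀ᶠ n in atTop, lamn n < δ₁ := hlamn0.eventually_lt_const hδ₁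
  have e4 : ∀ᶠ n in atTop, |tns n - t| + h n < δ₂ := by
    have h1 : Tendsto (fun n => |tns n - t|) atTop (𝓝 0) := by
      have h0 := (htnt.sub (tendsto_const_nhds (x := t))).abs
      simpa using h0
    have h2 : Tendsto (fun n => |tns n - t| + h n) atTop (𝓝 0) := by
      simpa using h1.add hh0
    exact h2.eventually_lt_const hδ₂
  have e5 : ∀ᶠ n in atTop, C * W * (t - tns n) < ε₁ := by
    have h2 : Tendsto (fun n => C * W * (t - tns n)) atTop (𝓝 0) := by
      have h0 := ((tendsto_const_nhds (x := t)).sub htnt).norm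
      have h1 := (tendsto_const_nhds (x := C * W)).mul (((tendsto_const_nhds (x := t)).sub htnt))
      simpa using h1
    exact h2.eventually_lt_const hε₁
  obtain ⟨N, hN⟩ := Filter.eventually_atTop.mp (e1.and (e2.and (hle.and (e4.and e5))))
  refine ⟨N, ?_⟩
  intro n hn
  obtain ⟨hd1, hd2, hd3, hd4, hd5⟩ := hN n hn
  replace hd3 : tns n ≤ t := hd3
  -- hd3 : tns n ≤ t
  have htnT : tns n ≤ T := le_trans hd3 htT
  -- facts about grid points
  have hgrid : ∀ k : ℕ, k ≤ kn n → (k : ℝ) * h n ∈ Icc (0:ℝ) t := by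
    intro k hk
    constructor
    · exact mul_nonneg (Nat.cast_nonneg k) (hhpos n).le
    · calc (k : ℝ) * h n ≤ (kn n : ℝ) * h n :=
          mul_le_mul_of_nonneg_right (by exact_mod_cast hk) (hhpos n).le
        _ = tns n := (htns_eq n).symm
        _ ≤ t := hd3
  set I : E := ∫ s in (0:ℝ)..t, Shat μ₀ (t - s) (w s) with hI_def
  set A : E := (lamn n * Tn n) • ∑ k ∈ Finset.range (kn n),
      R (μn n) (lamn n) ((kn n : ℝ) * lamn n * Tn n) ((k : ℝ) * lamn n * Tn n)
        (w ((k : ℝ) * lamn n * Tn n)) with hA_def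
  set Bn : E := ∑ k ∈ Finset.range (kn n),
      (h n) • (Shat μ₀ (tns n - (k : ℝ) * h n) (w ((k : ℝ) * h n))) with hB_def
  set Jn : E := ∫ s in (0:ℝ)..(tns n), g s with hJ_def
  -- Part 1 : ‖A - Bn‖ ≤ t * ε₁
  have part1 : ‖A - Bn‖ ≤ t * ε₁ := by
    have hAeq : A = ∑ k ∈ Finset.range (kn n),
        (h n) • (R (μn n) (lamn n) (tns n) ((k : ℝ) * h n) (w ((k : ℝ) * h n))) := by
      rw [hA_def, Finset.smul_sum]
      apply Finset.sum_congr rfl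
      intro k hk
      have : (k : ℝ) * lamn n * Tn n = (k : ℝ) * h n := mul_assoc _ _ _
      rw [this]
    rw [hAeq, hB_def, ← Finset.sum_sub_distrib]
    refine le_trans (norm_sum_le _ _) ?_
    refine le_trans (Finset.sum_le_card_nsmul _ _ (h n * ε₁) ?_) ?_
    · intro k hk
      rw [Finset.mem_range] at hk
      rw [← smul_sub, norm_smul, Real.norm_eq_abs, abs_of_pos (hhpos n)]
      refine mul_le_mul_of_nonneg_left ?_ (hhpos n).le
      have hk0 : (0:ℝ) ≤ (k : ℝ) * h n := mul_nonneg (Nat.cast_nonneg k) (hhpos n).le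
      have hkle : (k : ℝ) * h n ≤ tns n := by
        rw [htns_eq]
        exact mul_le_mul_of_nonneg_right (by exact_mod_cast hk.le) (hhpos n).le
      exact hkey (μn n) (lamn n) hd1 (hlamn n) hd2 ((k : ℝ) * h n) (hgrid k hk.le)
        (tns n) ((k : ℝ) * h n) hk0 hkle htnT
    · rw [Finset.card_range, nsmul_eq_mul]
      calc (kn n : ℝ) * (h n * ε₁) = tns n * ε₁ := by rw [htns_eq]; ring
        _ ≤ t * ε₁ := mul_le_mul_of_nonneg_right hd3 hε₁.le
  -- Part 2 : ‖Bn - Jn‖ ≤ t * ε₁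
  have part2 : ‖Bn - Jn‖ ≤ t * ε₁ := by
    have hJeq : Jn = ∑ k ∈ Finset.range (kn n),
        ∫ s in ((k : ℝ) * h n)..(((k:ℕ) + 1 : ℕ) : ℝ) * h n, g s := by
      have hint : ∀ k < kn n, IntervalIntegrable g MeasureTheory.volume
          ((k : ℝ) * h n) ((((k:ℕ) + 1 : ℕ) : ℝ) * h n) := by
        intro k hk
        exact hgInt _ _ (hgrid k hk.le) (hgrid (k+1) hk)
      have hsum := intervalIntegral.sum_integral_adjacent_intervals
        (a := fun k : ℕ => (k : ℝ) * h n) (f := g) (μ := MeasureTheory.volume) hint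
      simp only [Nat.cast_zero, zero_mul] at hsum
      rw [hJ_def, htns_eq n]
      exact hsum.symm
    rw [hB_def, hJeq, ← Finset.sum_sub_distrib]
    refine le_trans (norm_sum_le _ _) ?_
    refine le_trans (Finset.sum_le_card_nsmul _ _ (ε₁ * h n) ?_) ?_
    · intro k hk
      rw [Finset.mem_range] at hk
      have hk0 : (0:ℝ) ≤ (k : ℝ) * h n := mul_nonneg (Nat.cast_nonneg k) (hhpos n).le
      have hkk1 : (k : ℝ) * h n ≤ ((k:ℕ) + 1 : ℕ) * h n := by
        push_cast
        nlinarith [hhpos n]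
      have hk1le : (((k:ℕ) + 1 : ℕ) : ℝ) * h n ≤ tns n := by
        rw [htns_eq]
        refine mul_le_mul_of_nonneg_right ?_ (hhpos n).le
        exact_mod_cast hk
      have hconst : (h n) • Shat μ₀ (tns n - (k : ℝ) * h n) (w ((k : ℝ) * h n)) =
          ∫ s in ((k : ℝ) * h n)..(((k:ℕ) + 1 : ℕ) : ℝ) * h n,
            Shat μ₀ (tns n - (k : ℝ) * h n) (w ((k : ℝ) * h n)) := by
        rw [intervalIntegral.integral_const]
        congr 1
        push_cast
        ring
      rw [hconst, ← intervalIntegral.integral_sub intervalIntegrable_const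
        (hgInt _ _ (hgrid k hk.le) (hgrid (k+1) hk))]
      have hbnd : ∀ s ∈ Set.uIoc ((k : ℝ) * h n) ((((k:ℕ) + 1 : ℕ) : ℝ) * h n),
          ‖Shat μ₀ (tns n - (k : ℝ) * h n) (w ((k : ℝ) * h n)) - g s‖ ≤ ε₁ := by
        intro s hs
        rw [Set.uIoc_of_le hkk1] at hs
        have hs0 : 0 ≤ s := le_trans hk0 hs.1.le
        have hst : s ≤ t := le_trans (hs.2.trans hk1le) hd3
        have hpD : ((tns n - (k : ℝ) * h n, (k : ℝ) * h n) : ℝ × ℝ) ∈ D := by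
          have hkle : (k : ℝ) * h n ≤ tns n := by
            rw [htns_eq]
            exact mul_le_mul_of_nonneg_right (by exact_mod_cast hk.le) (hhpos n).le
          have hA1 : 0 ≤ tns n - (k : ℝ) * h n := by linarith
          have hA2 : tns n - (k : ℝ) * h n ≤ T := by linarith
          exact ⟨⟨hA1, hA2⟩, (hgrid k hk.le)⟩
        have hqD : ((t - s, s) : ℝ × ℝ) ∈ D := hmapsD s ⟨hs0, hst⟩
        have hdist : dist ((tns n - (k : ℝ) * h n, (k : ℝ) * h n) : ℝ × ℝ)
            ((t - s, s) : ℝ × ℝ) < δ₂ := by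
          rw [Prod.dist_eq]
          refine lt_of_le_of_lt (max_le ?_ ?_) hd4
          · rw [Real.dist_eq]
            have heq2 : tns n - (k : ℝ) * h n - (t - s) = (tns n - t) + (s - (k : ℝ) * h n) := by
              ring
            rw [heq2]
            have habs : |s - (k : ℝ) * h n| ≤ h n := by
              rw [abs_of_nonneg (by linarith [hs.1.le])]
              have : s ≤ (k : ℝ) * h n + h n := by
                have := hs.2
                push_cast at this
                linarith
              linarith
            calc |(tns n - t) + (s - (k : ℝ) * h n)| ≤ |tns n - t| + |s - (k : ℝ) * h n| :=
                abs_add_le _ _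
              _ ≤ |tns n - t| + h n := by linarith
          · rw [Real.dist_eq]
            have habs : |(k : ℝ) * h n - s| ≤ h n := by
              rw [abs_sub_comm, abs_of_nonneg (by linarith [hs.1.le])]
              have : s ≤ (k : ℝ) * h n + h n := by
                have := hs.2
                push_cast at this
                linarith
              linarith
            have : (0:ℝ) ≤ |tns n - t| := abs_nonneg _
            linarith
        have hF2 := hucont _ hpD _ hqD hdist
        rw [dist_eq_norm] at hF2
        exact le_of_lt hF2
      refine le_trans (intervalIntegral.norm_integral_le_of_norm_le_const hbnd) ?_
      have : |(((k:ℕ) + 1 : ℕ) : ℝ) * h n - (k : ℝ) * h n| = h n := by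
        push_cast
        rw [abs_of_nonneg (by nlinarith [hhpos n])]
        ring
      rw [this]
    · rw [Finset.card_range, nsmul_eq_mul]
      calc (kn n : ℝ) * (ε₁ * h n) = tns n * ε₁ := by rw [htns_eq]; ring
        _ ≤ t * ε₁ := mul_le_mul_of_nonneg_right hd3 hε₁.le
  -- Part 3 : ‖Jn - I‖ ≤ ε₁
  have part3 : ‖Jn - I‖ < ε₁ := by
    have htmem : tns n ∈ Icc (0:ℝ) t := ⟨(htnpos n).le, hd3⟩
    have hIadd : Jn + ∫ s in (tns n)..t, g s = I := by
      rw [hJ_def, hI_def]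
      exact intervalIntegral.integral_add_adjacent_intervals
        (hgInt 0 (tns n) h0mem htmem) (hgInt (tns n) t htmem ⟨ht.le, le_rfl⟩)
    have : Jn - I = -(∫ s in (tns n)..t, g s) := by
      rw [← hIadd]; abel
    rw [this, norm_neg]
    have hbnd : ∀ s ∈ Set.uIoc (tns n) t, ‖g s‖ ≤ C * W := by
      intro s hs
      rw [Set.uIoc_of_le hd3] at hs
      have hs0 : 0 ≤ s := le_trans (htnpos n).le hs.1.le
      have hgle : ‖g s‖ ≤ C * ‖w s‖ := hSbound (t - s) (by linarith [hs.2]) (by linarith) _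
      calc ‖g s‖ ≤ C * ‖w s‖ := hgle
        _ ≤ C * W := mul_le_mul_of_nonneg_left (hW s ⟨hs0, hs.2⟩) hCpos.le
    refine lt_of_le_of_lt (intervalIntegral.norm_integral_le_of_norm_le_const hbnd) ?_
    rw [abs_of_nonneg (by linarith : (0:ℝ) ≤ t - tns n)]
    exact hd5
  -- combine
  rw [dist_eq_norm]
  have htri : ‖A - I‖ ≤ ‖A - Bn‖ + ‖Bn - Jn‖ + ‖Jn - I‖ := by
    have := dist_triangle4 A Bn Jn I
    simpa [dist_eq_norm] using this
  have hfinal : t * ε₁ + t * ε₁ + ε₁ ≤ ε := by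
    have h2t : (0:ℝ) < 2*t + 2 := by linarith
    have heps : (2*t+2) * ε₁ = ε := by rw [hε₁_def]; field_simp
    nlinarith [hε₁.le]
  calc ‖A - I‖ ≤ ‖A - Bn‖ + ‖Bn - Jn‖ + ‖Jn - I‖ := htri
    _ < t * ε₁ + t * ε₁ + ε₁ := by
        have := add_le_add (add_le_add part1 part2) (le_refl ‖Jn - I‖)
        linarith [part3]
    _ ≤ ε := hfinal
end

section
/- Let E be a separable Banach space, l>0, and let W ⊂ L¹([0,l],E) be countable and integrably bounded, i.e. there exists c∈L¹([0,l],ℝ) with ‖w(t)‖ ≤ c(t) for all w∈W and almost every t∈[0,l]. Define φ : [0,l] → ℝ by φ(t) := β({w(t) : w∈W}), where β is the Hausdorff measure of noncompactness. Then φ ∈ L¹([0,l],ℝ) and β({∫₀^l w(τ) dτ : w∈W}) ≤ ∫₀^l φ(τ) dτ. -/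
open MeasureTheory Filter Set Topology

/-- The Hausdorff measure of noncompactness of a subset of a normed space. -/
noncomputable def hausdorffMNC {E : Type*} [SeminormedAddCommGroup E] (Q : Set E) : ℝ :=
  sInf {r : ℝ | 0 < r ∧ ∃ C : Finset E, Q ⊆ ⋃ c ∈ C, Metric.ball c r}

/-!
Fix a dense sequence `D` in `E`. For a bounded family `x`, `β({x i})` is the infimum over finite
index sets `F` of `sup_i min_{k ∈ F} ‖x i - D k‖`; this countable formula makes
`t ↦ β({w(t) : w ∈ W})` measurable, and it is dominated by `c`.

For the estimate fix `δ > 0`. Off a set where `c` has integral at most `δ`, a single finite piece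
`D 0, …, D (N-1)` of the sequence is, at every `t`, a `(β(t) + δ)`-net of `{w(t) : w ∈ W}`.
Assigning each `t` to the first net point close to `w(t)` cuts the domain into measurable pieces,
so `∫ w` lies within `∫ β + δ (l + 1)` of some `∑ a_k D k` with `a_k ∈ [0, l]`, and these sums form
a compact set.
-/

open Metric Bornology

section Seminormed

variable {E : Type*} [SeminormedAddCommGroup E]

lemma hausdorffMNC_nonneg (Q : Set E) : 0 ≤ hausdorffMNC Q :=
  Real.sInf_nonneg fun _ hr => hr.1.le

lemma hausdorffMNC_le_of_forall_pos {Q : Set E} {a : ℝ} (ha : 0 ≤ a)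
    (h : ∀ ε > 0, ∃ C : Finset E, Q ⊆ ⋃ c ∈ C, ball c (a + ε)) : hausdorffMNC Q ≤ a := by
  refine le_of_forall_pos_le_add fun ε hε => ?_
  obtain ⟨C, hC⟩ := h ε hε
  exact csInf_le ⟨0, fun _ hr => hr.1.le⟩ ⟨by linarith, C, hC⟩

lemma hausdorffMNC_le_of_forall_dist_le {Q K : Set E} {a : ℝ} (hK : TotallyBounded K)
    (ha : 0 ≤ a) (hQK : ∀ x ∈ Q, ∃ y ∈ K, dist x y ≤ a) : hausdorffMNC Q ≤ a := by
  refine hausdorffMNC_le_of_forall_pos ha fun ε hε => ?_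
  obtain ⟨C, hCfin, hKC⟩ := totallyBounded_iff.1 hK ε hε
  refine ⟨hCfin.toFinset, fun x hx => ?_⟩
  obtain ⟨y, hyK, hxy⟩ := hQK x hx
  obtain ⟨z, hzC, hyz⟩ := mem_iUnion₂.1 (hKC hyK)
  refine mem_iUnion₂.2 ⟨z, hCfin.mem_toFinset.2 hzC, ?_⟩
  rw [mem_ball] at hyz ⊢
  linarith [dist_triangle x y z]

lemma Bornology.IsBounded.exists_finset_dense_net {Q : Set E} (hQ : IsBounded Q) {D : ℕ → E}
    (hD : DenseRange D) {δ : ℝ} (hδ : 0 < δ) :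
    ∃ F : Finset ℕ, ∀ x ∈ Q, ∃ k ∈ F, dist x (D k) < hausdorffMNC Q + δ := by
  classical
  obtain ⟨R, hR⟩ := (isBounded_iff_subset_ball 0).1 hQ
  have hne : {r : ℝ | 0 < r ∧ ∃ C : Finset E, Q ⊆ ⋃ c ∈ C, ball c r}.Nonempty :=
    ⟨max R 1, by positivity, {0}, by simpa using hR.trans (ball_subset_ball (le_max_left R 1))⟩
  obtain ⟨r, ⟨-, C, hQC⟩, hr⟩ := exists_lt_of_csInf_lt hne (lt_add_of_pos_right _ (half_pos hδ))
  change r < hausdorffMNC Q + δ / 2 at hr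
  choose k hk using fun y => hD.exists_dist_lt y (half_pos hδ)
  refine ⟨C.image k, fun x hx => ?_⟩
  obtain ⟨y, hyC, hxy⟩ := mem_iUnion₂.1 (hQC hx)
  refine ⟨k y, Finset.mem_image_of_mem k hyC, ?_⟩
  rw [mem_ball] at hxy
  linarith [dist_triangle x y (D (k y)), hk y]

lemma hausdorffMNC_range_eq_toReal_iInf {ι : Type*} {x : ι → E} (hx : IsBounded (range x))
    {D : ℕ → E} (hD : DenseRange D) :
    hausdorffMNC (range x) = (⨅ F : Finset ℕ, ⨆ i, ⨅ k ∈ F, edist (x i) (D k)).toReal := by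
  set ψ := ⨅ F : Finset ℕ, ⨆ i, ⨅ k ∈ F, edist (x i) (D k)
  have hψ_le : ∀ δ > 0, ψ ≤ ENNReal.ofReal (hausdorffMNC (range x) + δ) := by
    intro δ hδ
    obtain ⟨F, hF⟩ := hx.exists_finset_dense_net hD hδ
    refine iInf_le_of_le F (iSup_le fun i => ?_)
    obtain ⟨k, hkF, hk⟩ := hF (x i) (mem_range_self i)
    exact iInf₂_le_of_le k hkF (edist_lt_ofReal.2 hk).le
  have hψ_top : ψ ≠ ⊤ := ne_top_of_le_ne_top ENNReal.ofReal_ne_top (hψ_le 1 one_pos)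
  refine le_antisymm (le_of_forall_pos_le_add fun ε hε => ?_)
    (le_of_forall_pos_le_add fun δ hδ => ENNReal.toReal_le_of_le_ofReal
      (add_nonneg (hausdorffMNC_nonneg _) hδ.le) (hψ_le δ hδ))
  have hlt : ψ < ENNReal.ofReal (ψ.toReal + ε) := by
    rw [ENNReal.ofReal_add ENNReal.toReal_nonneg hε.le, ENNReal.ofReal_toReal hψ_top]
    exact ENNReal.lt_add_right hψ_top (ENNReal.ofReal_pos.2 hε).ne'
  obtain ⟨F, hF⟩ := iInf_lt_iff.1 hlt
  refine hausdorffMNC_le_of_forall_dist_le (D '' F).toFinite.totallyBounded (by positivity) ?_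
  rintro _ ⟨i, rfl⟩
  obtain ⟨k, hk⟩ := iInf_lt_iff.1 ((le_iSup _ i).trans_lt hF)
  obtain ⟨hkF, hk⟩ := iInf_lt_iff.1 hk
  exact ⟨D k, mem_image_of_mem D hkF, (edist_lt_ofReal.1 hk).le⟩

end Seminormed

section Integral

variable {α : Type*} [MeasurableSpace α] {μ : Measure α} {E : Type*} [NormedAddCommGroup E]
  {ι : Type*} [Countable ι] {g : ι → α → E}

lemma aemeasurable_hausdorffMNC_range [TopologicalSpace.SeparableSpace E]
    (hg : ∀ i, AEStronglyMeasurable (g i) μ)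
    (hb : ∀ᵐ t ∂μ, IsBounded (range fun i => g i t)) :
    AEMeasurable (fun t => hausdorffMNC (range fun i => g i t)) μ := by
  obtain ⟨D, hD⟩ := TopologicalSpace.exists_dense_seq E
  have hmk : ∀ᵐ t ∂μ, ∀ i, g i t = (hg i).mk _ t := ae_all_iff.2 fun i => (hg i).ae_eq_mk
  refine ⟨fun t => (⨅ F : Finset ℕ, ⨆ i, ⨅ k ∈ F, edist ((hg i).mk _ t) (D k)).toReal, ?_, ?_⟩
  · refine .ennreal_toReal (.iInf fun F => .iSup fun i => .iInf fun k => .iInf fun _ => ?_)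
    simp only [edist_eq_enorm_sub]
    exact ((hg i).stronglyMeasurable_mk.sub stronglyMeasurable_const).enorm
  · filter_upwards [hb, hmk] with t hbt hmkt
    simp only [hmkt] at hbt ⊢
    exact hausdorffMNC_range_eq_toReal_iInf hbt hD

lemma integrable_hausdorffMNC_range [TopologicalSpace.SeparableSpace E]
    (hg : ∀ i, AEStronglyMeasurable (g i) μ) {c : α → ℝ} (hc : Integrable c μ)
    (hdom : ∀ᵐ t ∂μ, ∀ i, ‖g i t‖ ≤ c t) :
    Integrable (fun t => hausdorffMNC (range fun i => g i t)) μ := by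
  -- `‖c‖` rather than `c`: for empty `ι` nothing forces `c ≥ 0`.
  refine hc.norm.mono' (aemeasurable_hausdorffMNC_range hg ?_).aestronglyMeasurable ?_
  · filter_upwards [hdom] with t ht
    exact isBounded_iff_forall_norm_le.2 ⟨c t, forall_mem_range.2 ht⟩
  · filter_upwards [hdom] with t ht
    rw [Real.norm_of_nonneg (hausdorffMNC_nonneg _), Real.norm_eq_abs]
    refine hausdorffMNC_le_of_forall_dist_le (totallyBounded_singleton 0) (abs_nonneg _) ?_
    rintro _ ⟨i, rfl⟩
    exact ⟨0, rfl, by simpa using (ht i).trans (le_abs_self _)⟩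

lemma tendsto_setIntegral_compl_of_monotone [NormedSpace ℝ E] {s : ℕ → Set α}
    (hsm : ∀ n, MeasurableSet (s n)) (hs : Monotone s) (hcover : ∀ᵐ t ∂μ, ∃ n, t ∈ s n)
    {f : α → E} (hf : Integrable f μ) :
    Tendsto (fun n => ∫ t in (s n)ᶜ, f t ∂μ) atTop (𝓝 0) := by
  have h := tendsto_setIntegral_of_antitone (μ := μ) (f := f) (fun n => (hsm n).compl)
    (fun _ _ hmn => compl_subset_compl.2 (hs hmn)) ⟨0, hf.integrableOn⟩
  rwa [setIntegral_measure_zero _ (measure_eq_zero_iff_ae_notMem.2 ?_)] at h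
  simpa [← compl_iUnion] using hcover

lemma exists_sum_smul_near_setIntegral [NormedSpace ℝ E] [CompleteSpace E] [IsFiniteMeasure μ]
    {f : α → E} (hfm : StronglyMeasurable f) (hf : Integrable f μ) {r : α → ℝ} (hrm : Measurable r)
    (hr : Integrable r μ) {B : Set α} (hB : MeasurableSet B) (V : ℕ → E) (G : Finset ℕ)
    (hBV : ∀ t ∈ B, ∃ k ∈ G, ‖f t - V k‖ ≤ r t) :
    ∃ a : ℕ → ℝ, (∀ k, a k ∈ Icc 0 (μ.real B)) ∧
      ‖∫ t in B, f t ∂μ - ∑ k ∈ G, a k • V k‖ ≤ ∫ t in B, r t ∂μ := by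
  set S := disjointed fun k => B ∩ {t | k ∈ G ∧ ‖f t - V k‖ ≤ r t}
  have hSm : ∀ k, MeasurableSet (S k) := MeasurableSet.disjointed fun k =>
    hB.inter ((MeasurableSet.const _).inter
      (measurableSet_le (hfm.sub stronglyMeasurable_const).norm.measurable hrm))
  have hSsub : ∀ k, S k ⊆ B ∩ {t | k ∈ G ∧ ‖f t - V k‖ ≤ r t} := disjointed_subset _
  have hB_eq : B = ⋃ k ∈ G, S k := by
    refine Subset.antisymm (fun t ht => ?_)
      (iUnion₂_subset fun k _ => (hSsub k).trans inter_subset_left)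
    obtain ⟨k, hkG, hk⟩ := hBV t ht
    have ht' : t ∈ ⋃ j, S j := by
      rw [iUnion_disjointed]
      exact mem_iUnion.2 ⟨k, ht, hkG, hk⟩
    obtain ⟨j, hj⟩ := mem_iUnion.1 ht'
    exact mem_iUnion₂.2 ⟨j, (hSsub j hj).2.1, hj⟩
  have hdisj : (G : Set ℕ).Pairwise (Function.onFun Disjoint S) :=
    (disjoint_disjointed _).set_pairwise _
  refine ⟨fun k => μ.real (S k), fun k => ⟨measureReal_nonneg,
    measureReal_mono ((hSsub k).trans inter_subset_left)⟩, ?_⟩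
  calc ‖∫ t in B, f t ∂μ - ∑ k ∈ G, μ.real (S k) • V k‖
      = ‖∑ k ∈ G, ∫ t in S k, (f t - V k) ∂μ‖ := by
        conv_lhs => rw [hB_eq]
        rw [integral_biUnion_finset G (fun k _ => hSm k) hdisj fun k _ => hf.integrableOn,
          ← Finset.sum_sub_distrib]
        congr 1
        refine Finset.sum_congr rfl fun k _ => ?_
        rw [integral_sub hf.integrableOn (integrable_const _), setIntegral_const]
    _ ≤ ∑ k ∈ G, ∫ t in S k, r t ∂μ := norm_sum_le_of_le _ fun k _ =>
        norm_integral_le_of_norm_le hr.integrableOn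
          (ae_restrict_of_forall_mem (hSm k) fun t ht => (hSsub k ht).2.2)
    _ = ∫ t in B, r t ∂μ := by
        conv_rhs => rw [hB_eq]
        rw [integral_biUnion_finset G (fun k _ => hSm k) hdisj fun k _ => hr.integrableOn]

lemma exists_measurableSet_uniform_net
    (hg : ∀ i, StronglyMeasurable (g i)) {h : α → ℝ} (hh : Measurable h)
    (hgh : ∀ᵐ t ∂μ,
      IsBounded (range fun i => g i t) ∧ hausdorffMNC (range fun i => g i t) = h t)
    {D : ℕ → E} (hD : DenseRange D) {c : α → ℝ} (hc : Integrable c μ) {δ : ℝ} (hδ : 0 < δ) :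
    ∃ (B : Set α) (N : ℕ), MeasurableSet B ∧ ∫ t in Bᶜ, c t ∂μ ≤ δ ∧
      ∀ t ∈ B, ∀ i, ∃ k ∈ Finset.range N, ‖g i t - D k‖ ≤ h t + δ := by
  set s : ℕ → Set α := fun N => {t | ∀ i, ∃ k ∈ Finset.range N, ‖g i t - D k‖ ≤ h t + δ}
  have hsm : ∀ N, MeasurableSet (s N) := fun N => by
    have hk : ∀ i k, MeasurableSet {t | ‖g i t - D k‖ ≤ h t + δ} := fun i k =>
      measurableSet_le ((hg i).sub stronglyMeasurable_const).norm.measurable (hh.add_const δ)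
    convert MeasurableSet.iInter fun i =>
      Finset.measurableSet_biUnion (Finset.range N) fun k _ => hk i k using 1
    ext t
    simp [s]
  have hmono : Monotone s := fun m n hmn t ht i =>
    let ⟨k, hk, hkt⟩ := ht i
    ⟨k, Finset.range_mono hmn hk, hkt⟩
  have hcover : ∀ᵐ t ∂μ, ∃ N, t ∈ s N := by
    filter_upwards [hgh] with t ⟨hbdd, hht⟩
    obtain ⟨F, hF⟩ := hbdd.exists_finset_dense_net hD hδ
    obtain ⟨N, hN⟩ := F.exists_nat_subset_range
    refine ⟨N, fun i => ?_⟩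
    obtain ⟨k, hkF, hk⟩ := hF _ (mem_range_self i)
    exact ⟨k, hN hkF, by rw [← dist_eq_norm, ← hht]; exact hk.le⟩
  obtain ⟨N, hN⟩ := ((tendsto_setIntegral_compl_of_monotone hsm hmono hcover hc).eventually
    (ge_mem_nhds hδ)).exists
  exact ⟨s N, N, hsm N, hN, fun t ht => ht⟩

variable [IsFiniteMeasure μ] [NormedSpace ℝ E] [CompleteSpace E]
  [TopologicalSpace.SeparableSpace E] {c : α → ℝ}

lemma exists_isCompact_forall_dist_integral_le (hgm : ∀ i, StronglyMeasurable (g i))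
    (hg : ∀ i, Integrable (g i) μ) (hc : Integrable c μ) (hdom : ∀ᵐ t ∂μ, ∀ i, ‖g i t‖ ≤ c t)
    {δ : ℝ} (hδ : 0 < δ) :
    ∃ K : Set E, IsCompact K ∧ ∀ i, ∃ y ∈ K, dist (∫ t, g i t ∂μ) y ≤
      ∫ t, hausdorffMNC (range fun i => g i t) ∂μ + δ * (μ.real univ + 1) := by
  obtain ⟨D, hD⟩ := TopologicalSpace.exists_dense_seq E
  have hbdd : ∀ᵐ t ∂μ, IsBounded (range fun i => g i t) :=
    hdom.mono fun t ht => isBounded_iff_forall_norm_le.2 ⟨c t, forall_mem_range.2 ht⟩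
  have hφ := integrable_hausdorffMNC_range (fun i => (hgm i).aestronglyMeasurable) hc hdom
  have hφm := aemeasurable_hausdorffMNC_range (fun i => (hgm i).aestronglyMeasurable) hbdd
  set h := hφm.mk
  have hh : Integrable (fun t => h t + δ) μ :=
    (hφ.congr hφm.ae_eq_mk).add (integrable_const δ)
  obtain ⟨B, N, hB, hBc, hnet⟩ := exists_measurableSet_uniform_net hgm hφm.measurable_mk
    (hbdd.and hφm.ae_eq_mk) hD hc hδ
  refine ⟨(fun a : ℕ → ℝ => ∑ k ∈ Finset.range N, a k • D k) ''
    univ.pi fun _ => Icc 0 (μ.real univ), (isCompact_univ_pi fun _ => isCompact_Icc).image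
      (by fun_prop), fun i => ?_⟩
  obtain ⟨a, ha, hai⟩ := exists_sum_smul_near_setIntegral (hgm i) (hg i)
    (hφm.measurable_mk.add_const δ) hh hB D (Finset.range N) fun t ht => hnet t ht i
  refine ⟨_, ⟨a, fun k _ => ⟨(ha k).1, (ha k).2.trans (measureReal_mono (subset_univ _))⟩,
    rfl⟩, ?_⟩
  have hBint : ∫ t in B, (h t + δ) ∂μ ≤
      ∫ t, hausdorffMNC (range fun i => g i t) ∂μ + δ * μ.real univ :=
    calc ∫ t in B, (h t + δ) ∂μ ≤ ∫ t, (h t + δ) ∂μ :=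
          setIntegral_le_integral hh (hφm.ae_eq_mk.mono fun t ht => by
            have := hausdorffMNC_nonneg (range fun i => g i t)
            simp only [Pi.zero_apply]; linarith)
      _ = _ := by
        rw [integral_add (hφ.congr hφm.ae_eq_mk) (integrable_const δ), integral_const,
          integral_congr_ae hφm.ae_eq_mk.symm, smul_eq_mul, mul_comm]
  have hBcompl : ‖∫ t in Bᶜ, g i t ∂μ‖ ≤ δ := (norm_integral_le_of_norm_le hc.integrableOn
    (ae_restrict_of_ae (hdom.mono fun t ht => ht i))).trans hBc
  rw [dist_eq_norm, ← integral_add_compl hB (hg i), add_sub_right_comm]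
  linarith [norm_add_le (∫ t in B, g i t ∂μ - ∑ k ∈ Finset.range N, a k • D k)
    (∫ t in Bᶜ, g i t ∂μ)]

theorem hausdorffMNC_range_integral_le_of_stronglyMeasurable
    (hgm : ∀ i, StronglyMeasurable (g i)) (hg : ∀ i, Integrable (g i) μ) (hc : Integrable c μ)
    (hdom : ∀ᵐ t ∂μ, ∀ i, ‖g i t‖ ≤ c t) :
    hausdorffMNC (range fun i => ∫ t, g i t ∂μ) ≤
      ∫ t, hausdorffMNC (range fun i => g i t) ∂μ := by
  have hI : 0 ≤ ∫ t, hausdorffMNC (range fun i => g i t) ∂μ :=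
    integral_nonneg fun t => hausdorffMNC_nonneg _
  refine le_of_forall_pos_le_add fun ε hε => ?_
  have hm : 0 < μ.real univ + 1 := by positivity
  obtain ⟨K, hK, hnear⟩ :=
    exists_isCompact_forall_dist_integral_le hgm hg hc hdom (div_pos hε hm)
  refine hausdorffMNC_le_of_forall_dist_le hK.totallyBounded (by positivity) ?_
  rintro _ ⟨i, rfl⟩
  obtain ⟨y, hyK, hy⟩ := hnear i
  exact ⟨y, hyK, hy.trans_eq (by field_simp)⟩

theorem hausdorffMNC_range_integral_le (hg : ∀ i, Integrable (g i) μ) (hc : Integrable c μ)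
    (hdom : ∀ᵐ t ∂μ, ∀ i, ‖g i t‖ ≤ c t) :
    hausdorffMNC (range fun i => ∫ t, g i t ∂μ) ≤
      ∫ t, hausdorffMNC (range fun i => g i t) ∂μ := by
  have hmk : ∀ᵐ t ∂μ, ∀ i, g i t = (hg i).1.mk _ t :=
    ae_all_iff.2 fun i => (hg i).1.ae_eq_mk
  have hint : (fun i => ∫ t, g i t ∂μ) = fun i => ∫ t, (hg i).1.mk _ t ∂μ :=
    funext fun i => integral_congr_ae (hg i).1.ae_eq_mk
  have hφ : ∫ t, hausdorffMNC (range fun i => g i t) ∂μ =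
      ∫ t, hausdorffMNC (range fun i => (hg i).1.mk _ t) ∂μ :=
    integral_congr_ae (hmk.mono fun t ht => congrArg (hausdorffMNC ∘ range) (funext ht))
  rw [hint, hφ]
  exact hausdorffMNC_range_integral_le_of_stronglyMeasurable
    (fun i => (hg i).1.stronglyMeasurable_mk) (fun i => (hg i).congr (hg i).1.ae_eq_mk) hc
    (by filter_upwards [hdom, hmk] with t ht hmkt using fun i => hmkt i ▸ ht i)

end Integral

/-- Lemma 2.5 (Deimling): for a countable, integrably bounded family
`W ⊂ L¹([0,l],E)` on a separable Banach space, `t ↦ β({w(t) : w ∈ W})` is integrable and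
`β({∫₀ˡ w : w ∈ W}) ≤ ∫₀ˡ β({w(τ) : w ∈ W}) dτ`. -/
theorem mnc_integral_estimate
    {E : Type*} [NormedAddCommGroup E] [NormedSpace ℝ E] [CompleteSpace E]
    [TopologicalSpace.SeparableSpace E]
    (l : ℝ) (hl : 0 < l)
    (W : Set (ℝ → E)) (hWc : W.Countable)
    (hWint : ∀ w ∈ W, IntervalIntegrable w volume 0 l)
    (c : ℝ → ℝ) (hcint : IntervalIntegrable c volume 0 l)
    (hdom : ∀ w ∈ W, ∀ᵐ t ∂(volume.restrict (Set.Icc (0:ℝ) l)), ‖w t‖ ≤ c t) :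
    IntervalIntegrable (fun t => hausdorffMNC {x : E | ∃ w ∈ W, x = w t}) volume 0 l ∧
    hausdorffMNC {x : E | ∃ w ∈ W, x = ∫ τ in (0:ℝ)..l, w τ} ≤
      ∫ τ in (0:ℝ)..l, hausdorffMNC {x : E | ∃ w ∈ W, x = w τ} := by
  have : Countable W := hWc.to_subtype
  have hrange (f : (ℝ → E) → E) : {x | ∃ w ∈ W, x = f w} = range fun w : W => f w := by
    ext; simp [eq_comm]
  have hIcc : volume.restrict (Icc (0:ℝ) l) = volume.restrict (Ioc 0 l) :=
    Measure.restrict_congr_set Ioc_ae_eq_Icc.symm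
  have hg (w : W) : Integrable w.1 (volume.restrict (Ioc 0 l)) :=
    (intervalIntegrable_iff_integrableOn_Ioc_of_le hl.le).1 (hWint w w.2)
  have hc := (intervalIntegrable_iff_integrableOn_Ioc_of_le hl.le).1 hcint
  have hdom' : ∀ᵐ t ∂(volume.restrict (Ioc 0 l)), ∀ w : W, ‖w.1 t‖ ≤ c t :=
    ae_all_iff.2 fun w => hIcc ▸ hdom w w.2
  simp only [hrange, intervalIntegral.integral_of_le hl.le,
    intervalIntegrable_iff_integrableOn_Ioc_of_le hl.le]
  exact ⟨integrable_hausdorffMNC_range (fun w => (hg w).1) hc hdom',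
    hausdorffMNC_range_integral_le hg hc hdom'⟩
end

section
/- Let V be a Banach space densely and continuously embedded in a Banach space E, P a metric space, and {A^{(μ)}(t)}_{t≥0}, μ∈P, families of linear operators in E each satisfying the hyperbolic conditions (Hyp1)–(Hyp3) with constants M, ω, M_V, ω_V independent of μ. For each μ let {R^{(μ)}(t,s)}_{t≥s≥0} be the evolution system determined by {A^{(μ)}(t)}_{t≥0}, i.e. the unique evolution system satisfying ‖R^{(μ)}(t,s)‖ ≤ M e^{ω(t−s)}, ∂⁺/∂t R^{(μ)}(t,s)v|_{t=s} = A^{(μ)}(s)v for v∈V, and ∂/∂s R^{(μ)}(t,s)v = −R^{(μ)}(t,s)A^{(μ)}(s)v for v∈V, 0≤s≤t. Then for all μ,ν∈P, v̄∈V and t≥s≥0: ‖R^{(ν)}(t,s)v̄ − R^{(μ)}(t,s)v̄‖ ≤ M M_V e^{(|ω|+|ω_V|)t} ‖v̄‖_V ∫_s^t ‖A^{(ν)}(r) − A^{(μ)}(r)‖_{L(V,E)} dr. -/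
/-!
Fix a partition `s = r₀ ≤ ⋯ ≤ r_N = t` and let `w` be `v` run through the semigroups of `A^{(μ)}`
frozen at the partition points,
`w = S_{A^{(μ)}(r_{N-1})}(r_N - r_{N-1}) ⋯ S_{A^{(μ)}(r₀)}(r₁ - r₀) v`.
For `ρ = μ, ν`, differentiating `σ ↦ R^{(ρ)}(t,σ) u(σ)` along the frozen orbit `u` on each
subinterval and summing gives
`‖w - R^{(ρ)}(t,s) v‖ ≤ M M_V e^{(|ω|+|ω_V|)t} ‖v‖_V ∑ᵢ ∫_{rᵢ}^{rᵢ₊₁} ‖A^{(ρ)}(x) - A^{(μ)}(rᵢ)‖`,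
stability bounding `R^{(ρ)}` in `L(E)` and the frozen orbit in `V`. As the mesh tends to zero,
uniform continuity of `A^{(μ)}` makes the right side vanish for `ρ = μ` and tend to
`∫ ‖A^{(ν)} - A^{(μ)}‖` for `ρ = ν`. Comparing both systems with the frozen orbit, rather than
differentiating `σ ↦ R^{(ν)}(t,σ) R^{(μ)}(σ,s) v`, avoids needing `R^{(μ)}(σ,s)` to preserve `V`.
-/

open MeasureTheory Filter Set Topology

/-- The composition `S(t_{n-1})(s_{n-1}) ∘ ⋯ ∘ S(t_0)(s_0)` of members of a two-parameter
family of operators. -/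
def prodOps {E : Type*} [NormedAddCommGroup E] [NormedSpace ℝ E]
    (S : ℝ → ℝ → E →L[ℝ] E) (t s : ℕ → ℝ) : ℕ → E →L[ℝ] E
  | 0 => ContinuousLinearMap.id ℝ E
  | n + 1 => (S (t n) (s n)).comp (prodOps S t s n)

/-- Stability of a family `{S(t)}_{t ≥ 0}` of semigroups with constants `M`, `ω`:
`‖S(tₙ)(sₙ) ⋯ S(t₁)(s₁)‖ ≤ M e^{ω(s₁+⋯+sₙ)}` for `0 ≤ t₁ ≤ ⋯ ≤ tₙ` and `sᵢ ≥ 0`. -/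
def IsStableFamily {E : Type*} [NormedAddCommGroup E] [NormedSpace ℝ E]
    (S : ℝ → ℝ → E →L[ℝ] E) (M ω : ℝ) : Prop :=
  ∀ (n : ℕ) (t s : ℕ → ℝ), (∀ i, 0 ≤ t i) → (∀ i j, i ≤ j → t i ≤ t j) → (∀ i, 0 ≤ s i) →
    ‖prodOps S t s n‖ ≤ M * Real.exp (ω * ∑ i ∈ Finset.range n, s i)

/-- The hyperbolic (Kato) conditions (Hyp1)–(Hyp3) for a family `{A(t)}_{t≥0}` of generators,
relative to a continuous dense embedding `ι : V → E`. Here `S t` is the `C₀` semigroup on `E`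
generated by `A(t)`, `SV t` is its restriction to `V` (admissibility), and
`A t : V →L[ℝ] E` is the restriction of `A(t)` to `V` (so that `V ⊆ D(A(t))`). -/
structure IsHyperbolicFamily {V E : Type*}
    [NormedAddCommGroup V] [NormedSpace ℝ V]
    [NormedAddCommGroup E] [NormedSpace ℝ E]
    (iota : V →L[ℝ] E) (A : ℝ → (V →L[ℝ] E))
    (S : ℝ → ℝ → E →L[ℝ] E) (SV : ℝ → ℝ → V →L[ℝ] V)
    (M om MV omV : ℝ) : Prop where
  /-- (Hyp1): each `S t` is a `C₀` semigroup on `E`. -/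
  sem_E : ∀ t : ℝ, 0 ≤ t → IsC0Semigroup (S t)
  /-- (Hyp1)/(Hyp3): `A(t)v` is the generator of `S t` applied to `v ∈ V`. -/
  gen_on_V : ∀ t : ℝ, 0 ≤ t → ∀ v : V,
    Filter.Tendsto (fun h : ℝ => h⁻¹ • (S t h (iota v) - iota v)) (nhdsWithin 0 (Set.Ioi 0))
      (nhds (A t v))
  /-- (Hyp1): stability on `E` with constants `M`, `ω`. -/
  stable_E : IsStableFamily S M om
  /-- (Hyp2): each restricted semigroup `SV t` is a `C₀` semigroup on `V`. -/
  sem_V : ∀ t : ℝ, 0 ≤ t → IsC0Semigroup (SV t)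
  /-- (Hyp2): `V` is `A(t)`-admissible, `SV t` being the restriction of `S t` to `V`. -/
  compat : ∀ t h : ℝ, 0 ≤ t → 0 ≤ h → ∀ v : V, iota (SV t h v) = S t h (iota v)
  /-- (Hyp2): stability on `V` with constants `M_V`, `ω_V`. -/
  stable_V : IsStableFamily SV MV omV
  /-- (Hyp3): `t ↦ A(t) ∈ L(V,E)` is norm continuous on `[0,∞)`. -/
  contA : ContinuousOn A (Set.Ici 0)

/-- `R` is the evolution system determined by the hyperbolic family `{A(t)}` (with
restriction data `ι`, constants `M`, `ω`): an evolution system satisfying the exponential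
bound, the forward derivative identity at `t = s` and the backward derivative identity
on `V`. -/
def IsDeterminedEvolutionSystem {V E : Type*}
    [NormedAddCommGroup V] [NormedSpace ℝ V]
    [NormedAddCommGroup E] [NormedSpace ℝ E]
    (iota : V →L[ℝ] E) (A : ℝ → (V →L[ℝ] E)) (M om : ℝ)
    (R : ℝ → ℝ → E →L[ℝ] E) : Prop :=
  IsEvolutionSystem R ∧
  (∀ t s : ℝ, 0 ≤ s → s ≤ t → ‖R t s‖ ≤ M * Real.exp (om * (t - s))) ∧
  (∀ s : ℝ, 0 ≤ s → ∀ v : V,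
    Filter.Tendsto (fun h : ℝ => h⁻¹ • (R (s + h) s (iota v) - iota v))
      (nhdsWithin 0 (Set.Ioi 0)) (nhds (A s v))) ∧
  (∀ t : ℝ, ∀ v : V, ∀ s ∈ Set.Icc (0:ℝ) t,
    HasDerivWithinAt (fun σ : ℝ => R t σ (iota v)) (-(R t s (A s v))) (Set.Icc 0 t) s)

section Analysis

variable {E F : Type*} [NormedAddCommGroup E] [NormedSpace ℝ E]
  [NormedAddCommGroup F] [NormedSpace ℝ F]

theorem le_of_forall_pos_le_add_mul {a b C : ℝ} (h : ∀ ε > 0, a ≤ b + C * ε) : a ≤ b := by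
  have hlim : Tendsto (fun ε => b + C * ε) (𝓝[>] 0) (𝓝 b) :=
    ((continuous_const.add (continuous_const.mul continuous_id)).tendsto' 0 b
      (by simp)).mono_left nhdsWithin_le_nhds
  exact ge_of_tendsto hlim (eventually_nhdsWithin_of_forall h)

theorem exp_mul_le_exp_abs_mul {ω a b : ℝ} (ha : 0 ≤ a) (hab : a ≤ b) :
    Real.exp (ω * a) ≤ Real.exp (|ω| * b) :=
  Real.exp_le_exp.2 <| (mul_le_mul_of_nonneg_right (le_abs_self ω) ha).trans
    (mul_le_mul_of_nonneg_left hab (abs_nonneg ω))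

theorem tendsto_clm_apply_of_norm_le {α : Type*} {l : Filter α} {T : α → E →L[ℝ] F}
    {c : α → E} {x : E} {y : F} {C : ℝ} (hT : ∀ᶠ a in l, ‖T a‖ ≤ C)
    (hTx : Tendsto (fun a => T a x) l (𝓝 y)) (hc : Tendsto c l (𝓝 x)) :
    Tendsto (fun a => T a (c a)) l (𝓝 y) := by
  have hsmall : Tendsto (fun a => T a (c a - x)) l (𝓝 0) := by
    refine squeeze_zero_norm' ?_ (by simpa using ((hc.sub_const x).norm.const_mul C))
    filter_upwards [hT] with a ha
    exact (T a).le_of_opNorm_le ha _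
  simpa using hsmall.add hTx

theorem HasDerivWithinAt.clm_apply_of_norm_le {T : ℝ → E →L[ℝ] F} {f : ℝ → E} {f' : E}
    {g' : F} {s : Set ℝ} {r C : ℝ} (hf : HasDerivWithinAt f f' s r)
    (hT : ∀ᶠ y in 𝓝[s] r, ‖T y‖ ≤ C) (hTc : ContinuousWithinAt (fun y => T y f') s r)
    (hTf : HasDerivWithinAt (fun y => T y (f r)) g' s r) :
    HasDerivWithinAt (fun y => T y (f y)) (T r f' + g') s r := by
  rw [hasDerivWithinAt_iff_tendsto_slope] at hTf hf ⊢
  have hle : 𝓝[s \ {r}] r ≤ 𝓝[s] r := nhdsWithin_mono _ sdiff_subset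
  refine ((tendsto_clm_apply_of_norm_le (hle hT) (hTc.tendsto.mono_left hle) hf).add
    hTf).congr fun y => ?_
  simp only [slope_def_module, map_smul, map_sub]
  rw [← smul_add]
  abel_nf

theorem norm_sub_le_integral_of_hasDerivWithinAt_Ici {f f' : ℝ → E} {ψ : ℝ → ℝ} {a b : ℝ}
    (hab : a ≤ b) (hψ : Continuous ψ) (hf : ContinuousOn f (Icc a b))
    (hf' : ∀ x ∈ Ico a b, HasDerivWithinAt f (f' x) (Ici x) x)
    (bound : ∀ x ∈ Ico a b, ‖f' x‖ ≤ ψ x) : ‖f b - f a‖ ≤ ∫ x in a..b, ψ x := by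
  have hB (x : ℝ) : HasDerivAt (fun x => ∫ y in a..x, ψ y) (ψ x) x :=
    (hψ.integral_hasStrictDerivAt a x).hasDerivAt
  exact image_norm_le_of_norm_deriv_right_le_deriv_boundary (hf.sub continuousOn_const)
    (fun x hx => (hf' x hx).sub_const (f a)) (by simp) hB bound (right_mem_Icc.2 hab)

theorem exists_partition_dist_le {α : Type*} [PseudoMetricSpace α] {g : ℝ → α} {s t ε : ℝ}
    (hst : s ≤ t) (hg : ContinuousOn g (Icc s t)) (hε : 0 < ε) :
    ∃ (N : ℕ) (r : ℕ → ℝ), r 0 = s ∧ r N = t ∧ Monotone r ∧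
      ∀ i < N, ∀ x ∈ Icc (r i) (r (i + 1)), dist (g x) (g (r i)) ≤ ε := by
  obtain ⟨δ, hδ, hgδ⟩ :=
    Metric.uniformContinuousOn_iff_le.1 (isCompact_Icc.uniformContinuousOn_of_continuous hg) ε hε
  obtain ⟨N, hN⟩ := exists_nat_gt ((t - s) / δ)
  have hN0 : (0 : ℝ) < N := lt_of_le_of_lt (div_nonneg (sub_nonneg.2 hst) hδ.le) hN
  set Δ := (t - s) / N
  have hΔ : 0 ≤ Δ := div_nonneg (sub_nonneg.2 hst) hN0.le
  have hΔδ : Δ ≤ δ := by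
    rw [div_le_iff₀ hN0]
    rw [div_lt_iff₀ hδ] at hN
    linarith
  have hr : Monotone fun i : ℕ => s + i * Δ := fun i j hij => by dsimp only; gcongr
  have hNt : s + N * Δ = t := by rw [mul_div_cancel₀ _ hN0.ne']; ring
  refine ⟨N, fun i => s + i * Δ, by simp, hNt, hr, fun i hi x hx => ?_⟩
  have hiN : s + (i + 1 : ℕ) * Δ ≤ s + N * Δ := hr hi
  have hi0 : s ≤ s + i * Δ := le_add_of_nonneg_right (by positivity)
  refine hgδ x ⟨hi0.trans hx.1, hx.2.trans (hiN.trans hNt.le)⟩ _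
    ⟨hi0, (hx.1.trans hx.2).trans (hiN.trans hNt.le)⟩ ?_
  rw [Real.dist_eq, abs_of_nonneg (sub_nonneg.2 hx.1)]
  push_cast at hx
  linarith [hx.2]

end Analysis

theorem prodOps_congr {E : Type*} [NormedAddCommGroup E] [NormedSpace ℝ E]
    (S : ℝ → ℝ → E →L[ℝ] E) (t : ℕ → ℝ) {s s' : ℕ → ℝ} :
    ∀ n : ℕ, (∀ j < n, s j = s' j) → prodOps S t s n = prodOps S t s' n
  | 0, _ => rfl
  | n + 1, h => by
    rw [prodOps, prodOps, h n n.lt_succ_self, prodOps_congr S t n fun j hj => h j (by omega)]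

theorem IsStableFamily.nonneg {E : Type*} [NormedAddCommGroup E] [NormedSpace ℝ E]
    {S : ℝ → ℝ → E →L[ℝ] E} {M ω : ℝ} (h : IsStableFamily S M ω) : 0 ≤ M := by
  simpa using (norm_nonneg _).trans
    (h 0 (fun _ => 0) (fun _ => 0) (fun _ => le_rfl) (fun _ _ _ => le_rfl) fun _ => le_rfl)

section Evolution

variable {V E : Type*} [NormedAddCommGroup V] [NormedSpace ℝ V]
  [NormedAddCommGroup E] [NormedSpace ℝ E]

def frozenEvolution (S : ℝ → ℝ → V →L[ℝ] V) (r : ℕ → ℝ) : ℕ → V →L[ℝ] V :=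
  prodOps S r fun j => r (j + 1) - r j

theorem IsStableFamily.norm_comp_frozenEvolution_le {S : ℝ → ℝ → V →L[ℝ] V} {M ω : ℝ}
    (h : IsStableFamily S M ω) {r : ℕ → ℝ} (hr0 : 0 ≤ r 0) (hr : Monotone r) {i : ℕ} {x : ℝ}
    (hx : r i ≤ x) :
    ‖(S (r i) (x - r i)).comp (frozenEvolution S r i)‖ ≤ M * Real.exp (ω * (x - r 0)) := by
  set d := Function.update (fun j => r (j + 1) - r j) i (x - r i) with hd_def
  have hprod : (S (r i) (x - r i)).comp (frozenEvolution S r i) = prodOps S r d (i + 1) := by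
    rw [prodOps, hd_def, Function.update_self, frozenEvolution,
      prodOps_congr S r i fun j hj => (Function.update_of_ne hj.ne _ _).symm]
  have hsum : ∑ j ∈ Finset.range (i + 1), d j = x - r 0 := by
    rw [Finset.sum_range_succ, hd_def, Function.update_self,
      Finset.sum_congr rfl fun j hj => Function.update_of_ne (Finset.mem_range.1 hj).ne _ _,
      Finset.sum_range_sub (fun j => r j)]
    ring
  have hd (j : ℕ) : 0 ≤ d j := by
    rcases eq_or_ne j i with rfl | hj
    · simpa [d] using hx
    · simpa [d, hj] using hr j.le_succ
  rw [hprod, ← hsum]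
  exact h (i + 1) r d (fun j => hr0.trans (hr j.zero_le)) (fun _ _ hjk => hr hjk) hd

theorem IsEvolutionSystem.continuousOn_apply_right {R : ℝ → ℝ → E →L[ℝ] E}
    (hR : IsEvolutionSystem R) (t : ℝ) (x : E) : ContinuousOn (fun σ => R t σ x) (Icc 0 t) :=
  (hR.2.2 x).comp (continuous_const.prodMk continuous_id).continuousOn fun _ hσ => hσ

theorem IsDeterminedEvolutionSystem.norm_le {iota : V →L[ℝ] E} {A : ℝ → V →L[ℝ] E}
    {M om : ℝ} {R : ℝ → ℝ → E →L[ℝ] E} (hR : IsDeterminedEvolutionSystem iota A M om R)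
    {t σ : ℝ} (hσ : σ ∈ Icc 0 t) : ‖R t σ‖ ≤ M * Real.exp (|om| * t) := by
  have hM : 0 ≤ M := by simpa using (norm_nonneg _).trans (hR.2.1 0 0 le_rfl le_rfl)
  exact (hR.2.1 t σ hσ.1 hσ.2).trans <| mul_le_mul_of_nonneg_left
    (exp_mul_le_exp_abs_mul (sub_nonneg.2 hσ.2) (by linarith [hσ.1])) hM

theorem hasDerivWithinAt_Ici_semigroup_orbit {iota : V →L[ℝ] E} {T : ℝ → V →L[ℝ] V}
    {S : ℝ → E →L[ℝ] E} {B : V →L[ℝ] E}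
    (hT : ∀ x y : ℝ, 0 ≤ x → 0 ≤ y → T (x + y) = (T x).comp (T y))
    (hS : ∀ h : ℝ, 0 ≤ h → ∀ v, iota (T h v) = S h (iota v))
    (hB : ∀ v, Tendsto (fun h : ℝ => h⁻¹ • (S h (iota v) - iota v)) (𝓝[>] 0) (𝓝 (B v)))
    {a x : ℝ} (hax : a ≤ x) (w : V) :
    HasDerivWithinAt (fun y => iota (T (y - a) w)) (B (T (x - a) w)) (Ici x) x := by
  rw [hasDerivWithinAt_iff_tendsto_slope, Ici_sdiff_left]
  have hshift : Tendsto (fun y => y - x) (𝓝[>] x) (𝓝[>] 0) :=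
    tendsto_nhdsWithin_of_tendsto_nhds_of_eventually_within _
      (((continuous_sub_right x).tendsto' x 0 (sub_self x)).mono_left nhdsWithin_le_nhds)
      (eventually_nhdsWithin_of_forall fun y (hy : x < y) => sub_pos.2 hy)
  refine ((hB (T (x - a) w)).comp hshift).congr' ?_
  filter_upwards [self_mem_nhdsWithin] with y (hy : x < y)
  rw [Function.comp_apply, slope_def_module, ← hS _ (sub_nonneg.2 hy.le),
    ← (T (y - x)).comp_apply, ← hT _ _ (sub_nonneg.2 hy.le) (sub_nonneg.2 hax),
    sub_add_sub_cancel]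

variable {iota : V →L[ℝ] E} {A : ℝ → V →L[ℝ] E} {M om : ℝ} {R : ℝ → ℝ → E →L[ℝ] E}

/-- The right derivative of `x ↦ R t x (T (x - a) w)` is `R t x ((B - A x) (T (x - a) w))`. -/
theorem IsDeterminedEvolutionSystem.norm_sub_le_integral_of_semigroup
    (hR : IsDeterminedEvolutionSystem iota A M om R) {T : ℝ → V →L[ℝ] V} {S : ℝ → E →L[ℝ] E}
    {B : V →L[ℝ] E} (hT : IsC0Semigroup T) (hS : ∀ h : ℝ, 0 ≤ h → ∀ v, iota (T h v) = S h (iota v))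
    (hB : ∀ v, Tendsto (fun h : ℝ => h⁻¹ • (S h (iota v) - iota v)) (𝓝[>] 0) (𝓝 (B v)))
    {t a b CV : ℝ} (ha : 0 ≤ a) (hab : a ≤ b) (hbt : b ≤ t) {w : V}
    (hw : ∀ x ∈ Icc a b, ‖T (x - a) w‖ ≤ CV) {ψ : ℝ → ℝ} (hψ : Continuous ψ)
    (hAB : ∀ x ∈ Ico a b, ‖A x - B‖ ≤ ψ x) :
    ‖R t b (iota (T (b - a) w)) - R t a (iota w)‖ ≤
      ∫ x in a..b, M * Real.exp (|om| * t) * CV * ψ x := by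
  set CE := M * Real.exp (|om| * t)
  set u : ℝ → V := fun x => T (x - a) w
  have hsub : Icc a b ⊆ Icc 0 t := Icc_subset_Icc ha hbt
  have hu : ContinuousOn u (Icc a b) :=
    (hT.2.2 w).comp (continuousOn_id.sub continuousOn_const) fun x hx => sub_nonneg.2 hx.1
  have hcont : ContinuousOn (fun x => R t x (iota (u x))) (Icc a b) := fun x hx =>
    tendsto_clm_apply_of_norm_le (eventually_nhdsWithin_of_forall fun y hy => hR.norm_le (hsub hy))
      ((hR.1.continuousOn_apply_right t _).mono hsub x hx)
      ((iota.continuous.comp_continuousOn hu) x hx)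
  have hderiv : ∀ x ∈ Ico a b, HasDerivWithinAt (fun x => R t x (iota (u x)))
      (R t x ((B - A x) (u x))) (Ici x) x := by
    intro x hx
    have hxt : Icc x t ⊆ Icc 0 t := Icc_subset_Icc_left (ha.trans hx.1)
    have hprod := ((hasDerivWithinAt_Ici_semigroup_orbit hT.2.1 hS hB hx.1 w).mono
      Icc_subset_Ici_self).clm_apply_of_norm_le
      (eventually_nhdsWithin_of_forall fun y hy => hR.norm_le (hxt hy))
      ((hR.1.continuousOn_apply_right t _).mono hxt x ⟨le_rfl, (hx.2.trans_le hbt).le⟩)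
      ((hR.2.2.2 t (u x) x (hxt ⟨le_rfl, (hx.2.trans_le hbt).le⟩)).mono hxt)
    rw [sub_apply, map_sub, sub_eq_add_neg]
    exact hprod.mono_of_mem_nhdsWithin (Icc_mem_nhdsGE (hx.2.trans_le hbt))
  have hbound : ∀ x ∈ Ico a b, ‖R t x ((B - A x) (u x))‖ ≤ CE * CV * ψ x := by
    intro x hx
    have hRx : ‖R t x‖ ≤ CE := hR.norm_le (hsub (Ico_subset_Icc_self hx))
    have hBA : ‖B - A x‖ ≤ ψ x := by rw [norm_sub_rev]; exact hAB x hx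
    calc ‖R t x ((B - A x) (u x))‖ ≤ ‖R t x‖ * (‖B - A x‖ * ‖u x‖) :=
          (R t x).le_opNorm_of_le ((B - A x).le_opNorm _)
      _ ≤ CE * (ψ x * CV) :=
          mul_le_mul hRx (mul_le_mul hBA (hw x (Ico_subset_Icc_self hx)) (norm_nonneg _)
            ((norm_nonneg _).trans hBA)) (by positivity) ((norm_nonneg _).trans hRx)
      _ = CE * CV * ψ x := by ring
  simpa [u, hT.1] using norm_sub_le_integral_of_hasDerivWithinAt_Ici hab
    (continuous_const.mul hψ) hcont hderiv hbound

theorem IsDeterminedEvolutionSystem.norm_frozenEvolution_sub_le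
    (hR : IsDeterminedEvolutionSystem iota A M om R) {Aμ : ℝ → V →L[ℝ] E}
    {S : ℝ → ℝ → E →L[ℝ] E} {SV : ℝ → ℝ → V →L[ℝ] V} {M' om' MV omV : ℝ}
    (hμ : IsHyperbolicFamily iota Aμ S SV M' om' MV omV) {r : ℕ → ℝ} {N : ℕ} {s t : ℝ}
    (hs : 0 ≤ s) (hr0 : r 0 = s) (hrN : r N = t) (hr : Monotone r) {ψ : ℝ → ℝ}
    (hψ : Continuous ψ) (hAψ : ∀ i < N, ∀ x ∈ Ico (r i) (r (i + 1)), ‖A x - Aμ (r i)‖ ≤ ψ x)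
    (v : V) :
    ‖iota (frozenEvolution SV r N v) - R t s (iota v)‖ ≤
      M * MV * Real.exp ((|om| + |omV|) * t) * ‖v‖ * ∫ x in s..t, ψ x := by
  set K := M * Real.exp (|om| * t) * (MV * Real.exp (|omV| * t) * ‖v‖)
  set w : ℕ → V := fun i => frozenEvolution SV r i v
  have hr0' (i : ℕ) : 0 ≤ r i := hs.trans (hr0 ▸ hr i.zero_le)
  have hstep : ∀ i < N, dist (R t (r i) (iota (w i))) (R t (r (i + 1)) (iota (w (i + 1)))) ≤
      ∫ x in r i..r (i + 1), K * ψ x := by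
    intro i hi
    have hit : r (i + 1) ≤ t := hrN ▸ hr hi
    have hw : ∀ x ∈ Icc (r i) (r (i + 1)),
        ‖SV (r i) (x - r i) (w i)‖ ≤ MV * Real.exp (|omV| * t) * ‖v‖ := fun x hx =>
      ((SV (r i) (x - r i)).comp (frozenEvolution SV r i)).le_of_opNorm_le
        ((hμ.stable_V.norm_comp_frozenEvolution_le (hr0' 0) hr hx.1).trans
          (mul_le_mul_of_nonneg_left (exp_mul_le_exp_abs_mul
            (sub_nonneg.2 ((hr i.zero_le).trans hx.1)) (by linarith [hx.2, hr0' 0]))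
            hμ.stable_V.nonneg)) v
    rw [dist_comm, dist_eq_norm]
    exact hR.norm_sub_le_integral_of_semigroup (hμ.sem_V (r i) (hr0' i))
      (fun h hh u => hμ.compat (r i) h (hr0' i) hh u) (hμ.gen_on_V (r i) (hr0' i))
      (hr0' i) (hr i.le_succ) hit hw hψ (hAψ i hi)
  have hRtt : R t t = ContinuousLinearMap.id ℝ E := hR.1.1 t (hrN ▸ hr0' N)
  calc ‖iota (w N) - R t s (iota v)‖
      = dist (R t (r 0) (iota (w 0))) (R t (r N) (iota (w N))) := by
        rw [dist_comm, dist_eq_norm, hr0, hrN, hRtt]; rfl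
    _ ≤ ∑ i ∈ Finset.range N, dist (R t (r i) (iota (w i))) (R t (r (i + 1)) (iota (w (i + 1)))) :=
        dist_le_range_sum_dist (fun i => R t (r i) (iota (w i))) N
    _ ≤ ∑ i ∈ Finset.range N, ∫ x in r i..r (i + 1), K * ψ x :=
        Finset.sum_le_sum fun i hi => hstep i (Finset.mem_range.1 hi)
    _ = K * ∫ x in s..t, ψ x := by
        rw [intervalIntegral.sum_integral_adjacent_intervals (f := fun x => K * ψ x) fun _ _ =>
          (continuous_const.mul hψ).intervalIntegrable _ _, hr0, hrN,
          intervalIntegral.integral_const_mul]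
    _ = M * MV * Real.exp ((|om| + |omV|) * t) * ‖v‖ * ∫ x in s..t, ψ x := by
        rw [add_mul, Real.exp_add]
        ring

theorem IsDeterminedEvolutionSystem.norm_sub_le_of_partition
    {Aν : ℝ → V →L[ℝ] E} {Rν : ℝ → ℝ → E →L[ℝ] E}
    (hν : IsDeterminedEvolutionSystem iota Aν M om Rν)
    (hμ : IsDeterminedEvolutionSystem iota A M om R)
    {S : ℝ → ℝ → E →L[ℝ] E} {SV : ℝ → ℝ → V →L[ℝ] V} {M' om' MV omV : ℝ}
    (hA : IsHyperbolicFamily iota A S SV M' om' MV omV) {r : ℕ → ℝ} {N : ℕ} {s t : ℝ}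
    (hs : 0 ≤ s) (hr0 : r 0 = s) (hrN : r N = t) (hr : Monotone r) {φ : ℝ → ℝ}
    (hφ : Continuous φ) (hAφ : ∀ x ∈ Icc s t, ‖Aν x - A x‖ ≤ φ x) {ε : ℝ}
    (hε : ∀ i < N, ∀ x ∈ Ico (r i) (r (i + 1)), ‖A x - A (r i)‖ ≤ ε) (v : V) :
    ‖Rν t s (iota v) - R t s (iota v)‖ ≤
      M * MV * Real.exp ((|om| + |omV|) * t) * ‖v‖ * (∫ x in s..t, φ x) +
        2 * (M * MV * Real.exp ((|om| + |omV|) * t) * ‖v‖) * (t - s) * ε := by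
  have hμw := hμ.norm_frozenEvolution_sub_le hA hs hr0 hrN hr continuous_const hε v
  have hνw := hν.norm_frozenEvolution_sub_le hA hs hr0 hrN hr (ψ := fun x => φ x + ε)
    (hφ.add continuous_const) (fun i hi x hx => ?_) v
  · set w := iota (frozenEvolution SV r N v)
    calc ‖Rν t s (iota v) - R t s (iota v)‖
        = dist (Rν t s (iota v)) (R t s (iota v)) := (dist_eq_norm _ _).symm
      _ ≤ dist w (Rν t s (iota v)) + dist w (R t s (iota v)) := dist_triangle_left _ _ _
      _ ≤ _ := by
        rw [intervalIntegral.integral_add (hφ.intervalIntegrable _ _) intervalIntegrable_const,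
          intervalIntegral.integral_const, smul_eq_mul] at hνw
        rw [intervalIntegral.integral_const, smul_eq_mul] at hμw
        rw [dist_eq_norm, dist_eq_norm]
        linarith
  · have hx' : x ∈ Icc s t := ⟨hr0 ▸ (hr i.zero_le).trans hx.1, hrN ▸ hx.2.le.trans (hr hi)⟩
    calc ‖Aν x - A (r i)‖ ≤ ‖Aν x - A x‖ + ‖A x - A (r i)‖ :=
          norm_sub_le_norm_sub_add_norm_sub _ _ _
      _ ≤ φ x + ε := add_le_add (hAφ x hx') (hε i hi x hx)

end Evolution

theorem hyperbolic_evolution_systems_perturbation_estimate_general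
    {V E : Type*} [NormedAddCommGroup V] [NormedSpace ℝ V]
    [NormedAddCommGroup E] [NormedSpace ℝ E]
    {P : Type*}
    (iota : V →L[ℝ] E)
    (A : P → ℝ → (V →L[ℝ] E)) (S : P → ℝ → ℝ → E →L[ℝ] E) (SV : P → ℝ → ℝ → V →L[ℝ] V)
    (M om MV omV : ℝ)
    (hhyp : ∀ μ : P, IsHyperbolicFamily iota (A μ) (S μ) (SV μ) M om MV omV)
    (R : P → ℝ → ℝ → E →L[ℝ] E)
    (hdet : ∀ μ : P, IsDeterminedEvolutionSystem iota (A μ) M om (R μ)) :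
    ∀ (μ ν : P) (v : V) (t s : ℝ), 0 ≤ s → s ≤ t →
      ‖R ν t s (iota v) - R μ t s (iota v)‖ ≤
        M * MV * Real.exp ((|om| + |omV|) * t) * ‖v‖ *
          ∫ r in s..t, ‖A ν r - A μ r‖ := by
  intro μ ν v t s hs hst
  have hA (ρ : P) : Continuous fun r : ℝ => A ρ (max r 0) :=
    (hhyp ρ).contA.comp_continuous (continuous_id.max continuous_const)
      fun _ => mem_Ici.2 (le_max_right _ _)
  set φ : ℝ → ℝ := fun r => ‖A ν (max r 0) - A μ (max r 0)‖
  have hφ (x : ℝ) (hx : x ∈ Icc s t) : ‖A ν x - A μ x‖ = φ x := by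
    simp only [φ, max_eq_left (hs.trans hx.1)]
  rw [intervalIntegral.integral_congr fun x hx => hφ x (uIcc_of_le hst ▸ hx)]
  apply le_of_forall_pos_le_add_mul
  intro ε hε
  obtain ⟨N, r, hr0, hrN, hr, hmesh⟩ :=
    exists_partition_dist_le hst ((hhyp μ).contA.mono fun x hx => hs.trans hx.1) hε
  exact (hdet ν).norm_sub_le_of_partition (hdet μ) (hhyp μ) hs hr0 hrN hr
    (continuous_norm.comp ((hA ν).sub (hA μ))) (fun x hx => (hφ x hx).le)
    (fun i hi x hx => dist_eq_norm (A μ x) _ ▸ hmesh i hi x (Ico_subset_Icc_self hx)) v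

/-- Proposition 3.2(i): perturbation estimate for evolution systems determined by
parameterized hyperbolic families with constants independent of the parameter. -/
theorem hyperbolic_evolution_systems_perturbation_estimate
    {V E : Type*} [NormedAddCommGroup V] [NormedSpace ℝ V] [CompleteSpace V]
    [NormedAddCommGroup E] [NormedSpace ℝ E] [CompleteSpace E]
    {P : Type*} [MetricSpace P]
    (iota : V →L[ℝ] E) (hinj : Function.Injective iota) (hdense : DenseRange iota)
    (A : P → ℝ → (V →L[ℝ] E)) (S : P → ℝ → ℝ → E →L[ℝ] E) (SV : P → ℝ → ℝ → V →L[ℝ] V)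
    (M om MV omV : ℝ) (hM : 1 ≤ M) (hMV : 1 ≤ MV)
    (hhyp : ∀ μ : P, IsHyperbolicFamily iota (A μ) (S μ) (SV μ) M om MV omV)
    (R : P → ℝ → ℝ → E →L[ℝ] E)
    (hdet : ∀ μ : P, IsDeterminedEvolutionSystem iota (A μ) M om (R μ)) :
    ∀ (μ ν : P) (v : V) (t s : ℝ), 0 ≤ s → s ≤ t →
      ‖R ν t s (iota v) - R μ t s (iota v)‖ ≤
        M * MV * Real.exp ((|om| + |omV|) * t) * ‖v‖ *
          ∫ r in s..t, ‖A ν r - A μ r‖ :=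
  hyperbolic_evolution_systems_perturbation_estimate_general iota A S SV M om MV omV hhyp R hdet
end

section
/- Let X be a normed space and P a metric space. For each ν∈P let B^{(ν)} : [0,∞) → X be continuous, and for each μ∈P let C^{(μ)} ∈ X. Assume that for every μ∈P, lim_{T→+∞, ν→μ} (1/T)∫₀^T ‖B^{(ν)}(t+h) − C^{(μ)}‖ dt = 0 uniformly with respect to h≥0. Then for every μ∈P and all t,s≥0 with t≥s, lim_{λ→0⁺, ν→μ} ∫_s^t ‖B^{(ν)}(r/λ) − C^{(μ)}‖ dr = 0. -/
open MeasureTheory Filter Set Topology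

/-- Lemma 3.5 (abstract form): if the averages `(1/T)∫₀ᵀ ‖B^{(ν)}(t+h) − C^{(μ)}‖ dt` tend
to `0` as `T → ∞`, `ν → μ`, uniformly in `h ≥ 0`, then
`∫ₛᵗ ‖B^{(ν)}(r/λ) − C^{(μ)}‖ dr → 0` as `λ → 0⁺`, `ν → μ`. -/
theorem integral_averaging_lemma
    {X : Type*} [NormedAddCommGroup X] [NormedSpace ℝ X]
    {P : Type*} [MetricSpace P]
    (B : P → ℝ → X) (hBcont : ∀ ν : P, ContinuousOn (B ν) (Set.Ici 0))
    (C : P → X)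
    (havg : ∀ μ : P, ∀ ε > (0:ℝ), ∃ T₀ > (0:ℝ), ∃ δ > (0:ℝ), ∀ T : ℝ, T₀ ≤ T →
      ∀ ν : P, dist ν μ ≤ δ → ∀ h : ℝ, 0 ≤ h →
        (1 / T) * (∫ r in (0:ℝ)..T, ‖B ν (r + h) - C μ‖) ≤ ε) :
    ∀ (μ : P) (t s : ℝ), 0 ≤ s → s ≤ t → ∀ ε > (0:ℝ), ∃ δ > (0:ℝ),
      ∀ (lam : ℝ) (ν : P), 0 < lam → lam < δ → dist ν μ < δ →
        (∫ r in s..t, ‖B ν (r / lam) - C μ‖) ≤ ε := by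
  intro μ t s hs hst ε hε
  rcases eq_or_lt_of_le hst with rfl | hst'
  · exact ⟨1, one_pos, fun lam ν _ _ _ => by simp [intervalIntegral.integral_same, hε.le]⟩
  · set d : ℝ := t - s with hd
    have hd0 : 0 < d := sub_pos.mpr hst'
    obtain ⟨T₀, hT₀, δ₀, hδ₀, H⟩ := havg μ (ε / d) (div_pos hε hd0)
    refine ⟨min δ₀ (d / T₀), lt_min hδ₀ (div_pos hd0 hT₀), fun lam ν hlam hlamδ hνδ => ?_⟩
    have hlamne : lam ≠ 0 := ne_of_gt hlam
    have hT : T₀ ≤ d / lam := by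
      rw [le_div_iff₀ hlam]
      have : lam < d / T₀ := lt_of_lt_of_le hlamδ (min_le_right _ _)
      calc T₀ * lam = lam * T₀ := mul_comm _ _
        _ ≤ (d / T₀) * T₀ := by nlinarith
        _ = d := by field_simp
    have hν' : dist ν μ ≤ δ₀ := le_of_lt (lt_of_lt_of_le hνδ (min_le_left _ _))
    have hh : (0:ℝ) ≤ s / lam := div_nonneg hs hlam.le
    have key := H (d / lam) hT ν hν' (s / lam) hh
    have heq : (∫ r in s..t, ‖B ν (r / lam) - C μ‖)
        = lam * ∫ r in (0:ℝ)..(d / lam), ‖B ν (r + s / lam) - C μ‖ := by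
      rw [intervalIntegral.integral_comp_div (fun x => ‖B ν x - C μ‖) hlamne,
        intervalIntegral.integral_comp_add_right (fun x => ‖B ν x - C μ‖) (s / lam),
        smul_eq_mul, zero_add, show d / lam + s / lam = t / lam from by rw [hd]; ring]
    rw [heq]
    have hTpos : 0 < d / lam := div_pos hd0 hlam
    have h1 : (∫ r in (0:ℝ)..(d / lam), ‖B ν (r + s / lam) - C μ‖) ≤ (ε / d) * (d / lam) := by
      rw [div_mul_eq_mul_div, one_mul, div_le_iff₀ hTpos] at key
      linarith [key]
    calc lam * ∫ r in (0:ℝ)..(d / lam), ‖B ν (r + s / lam) - C μ‖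
        ≤ lam * ((ε / d) * (d / lam)) := by nlinarith
      _ = ε := by field_simp
end
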